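/- arXiv:1710.09173 — 7 statements merged into one kernel-verified Lean document; each statement's English description precedes it below -/
import Mathlib

section
/- For every real s > 1/2 there exists a constant c_s > 0 such that for all x, y ∈ ℓ²_s the convolution x⋆y belongs to ℓ²_s and ‖x⋆y‖_s ≤ c_s ‖x‖_s ‖y‖_s. -/
/-! With `w k = (1 + k²)^(s/2)`, Peetre's inequality `w (i + j) ≤ 2^s (w i + w j)` bounds
`w l |(x ⋆ y) l|` by `2^s ((w|x|) ⋆ |y| + |x| ⋆ (w|y|)) l`. Young's inequality
`‖a ⋆ v‖₂ ≤ ‖a‖₂ ‖v‖₁` bounds both terms in `ℓ²`, and for `s > 1/2` Cauchy–Schwarz gives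
`‖v‖₁² ≤ (∑ k, (1 + k²)^(-s)) ‖w v‖₂²`. All estimates are made for `ℝ≥0∞`-valued sequences, where
every series has a sum; summability is recovered at the end from finiteness. -/

open MeasureTheory
open scoped ENNReal

namespace ENNReal

variable {ι : Type*}

theorem rpow_one_div_two_sq (a : ℝ≥0∞) : (a ^ (1 / 2 : ℝ)) ^ 2 = a := by
  rw [← ENNReal.rpow_natCast, ← ENNReal.rpow_mul]; norm_num

theorem sq_tsum_mul_le (f g : ι → ℝ≥0∞) :
    (∑' i, f i * g i) ^ 2 ≤ (∑' i, f i ^ 2) * ∑' i, g i ^ 2 := by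
  let _ : MeasurableSpace ι := ⊤
  have h := lintegral_mul_le_Lp_mul_Lq Measure.count Real.HolderConjugate.two_two
    (measurable_from_top (f := f)).aemeasurable (measurable_from_top (f := g)).aemeasurable
  simp only [Pi.mul_apply, lintegral_count' measurable_from_top, ENNReal.rpow_two] at h
  simpa only [mul_pow, rpow_one_div_two_sq] using pow_le_pow_left₀ zero_le h 2

theorem add_sq_le_two_mul (a b : ℝ≥0∞) : (a + b) ^ 2 ≤ 2 * (a ^ 2 + b ^ 2) := by
  have h := ENNReal.rpow_add_le_mul_rpow_add_rpow a b one_le_two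
  norm_num [ENNReal.rpow_two] at h
  exact h

theorem sq_tsum_le_tsum_inv_sq_mul {w : ι → ℝ≥0∞} (hw₀ : ∀ i, w i ≠ 0) (hw : ∀ i, w i ≠ ∞)
    (z : ι → ℝ≥0∞) : (∑' i, z i) ^ 2 ≤ (∑' i, (w i)⁻¹ ^ 2) * ∑' i, w i ^ 2 * z i ^ 2 := by
  calc (∑' i, z i) ^ 2 = (∑' i, (w i)⁻¹ * (w i * z i)) ^ 2 := by
        simp only [← mul_assoc, ENNReal.inv_mul_cancel (hw₀ _) (hw _), one_mul]
    _ ≤ (∑' i, (w i)⁻¹ ^ 2) * ∑' i, (w i * z i) ^ 2 := sq_tsum_mul_le _ _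
    _ = _ := by simp only [mul_pow]

theorem tsum_sq_tsum_mul_sub_le {G : Type*} [AddGroup G] (a v : G → ℝ≥0∞) :
    ∑' l, (∑' i, a i * v (l - i)) ^ 2 ≤ (∑' j, v j) ^ 2 * ∑' i, a i ^ 2 := by
  have hpoint : ∀ l, (∑' i, a i * v (l - i)) ^ 2 ≤ (∑' j, v j) * ∑' i, a i ^ 2 * v (l - i) := by
    intro l
    calc (∑' i, a i * v (l - i)) ^ 2
        = (∑' i, a i * v (l - i) ^ (1 / 2 : ℝ) * v (l - i) ^ (1 / 2 : ℝ)) ^ 2 := by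
          simp only [mul_assoc, ← sq, rpow_one_div_two_sq]
      _ ≤ (∑' i, (a i * v (l - i) ^ (1 / 2 : ℝ)) ^ 2) * ∑' i, (v (l - i) ^ (1 / 2 : ℝ)) ^ 2 :=
          sq_tsum_mul_le _ _
      _ = (∑' j, v j) * ∑' i, a i ^ 2 * v (l - i) := by
          have hflip : ∑' i, v (l - i) = ∑' j, v j := (Equiv.subLeft l).tsum_eq v
          simp only [mul_pow, rpow_one_div_two_sq, hflip, mul_comm]
  have hshift : ∀ i, ∑' l, v (l - i) = ∑' j, v j := fun i => (Equiv.subRight i).tsum_eq v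
  calc ∑' l, (∑' i, a i * v (l - i)) ^ 2
      ≤ ∑' l, (∑' j, v j) * ∑' i, a i ^ 2 * v (l - i) := ENNReal.tsum_le_tsum hpoint
    _ = (∑' j, v j) ^ 2 * ∑' i, a i ^ 2 := by
      simp only [ENNReal.tsum_mul_left, ENNReal.tsum_comm (α := G) (β := G), hshift,
        ENNReal.tsum_mul_right]
      ring

end ENNReal

theorem one_add_sq_add_rpow_le (a b : ℝ) {t : ℝ} (ht : 0 ≤ t) :
    (1 + (a + b) ^ 2) ^ t ≤ 4 ^ t * ((1 + a ^ 2) ^ t + (1 + b ^ 2) ^ t) := by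
  have hdom : ∀ a b : ℝ, b ^ 2 ≤ a ^ 2 → (1 + (a + b) ^ 2) ^ t ≤ 4 ^ t * (1 + a ^ 2) ^ t := by
    intro a b hab
    rw [← Real.mul_rpow (by norm_num) (by positivity)]
    exact Real.rpow_le_rpow (by positivity) (by nlinarith [sq_nonneg (a - b)]) ht
  have h4 : (0 : ℝ) ≤ 4 ^ t := by positivity
  rcases le_total (b ^ 2) (a ^ 2) with hab | hba
  · have : 0 ≤ (1 + b ^ 2) ^ t := by positivity
    nlinarith [hdom a b hab]
  · have : 0 ≤ (1 + a ^ 2) ^ t := by positivity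
    nlinarith [add_comm a b ▸ hdom b a hba]

theorem summable_one_add_sq_rpow_neg {s : ℝ} (hs : 1 / 2 < s) :
    Summable fun k : ℤ => (1 + (k : ℝ) ^ 2) ^ (-s) := by
  refine (Real.summable_abs_int_rpow (b := 2 * s) (by linarith)).of_norm_bounded_eventually ?_
  filter_upwards [(Set.finite_singleton (0 : ℤ)).compl_mem_cofinite] with k hk
  have hk : (0 : ℝ) < |(k : ℝ)| := by simpa using hk
  rw [Real.norm_of_nonneg (by positivity), ← mul_neg, Real.rpow_mul hk.le,
    Real.rpow_two, sq_abs]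
  exact Real.rpow_le_rpow_of_nonpos (by rw [← sq_abs]; positivity) (by linarith) (by linarith)

noncomputable def sobolevWeight (s : ℝ) (k : ℤ) : ℝ≥0∞ :=
  ENNReal.ofReal ((1 + (k : ℝ) ^ 2) ^ (s / 2))

section SobolevWeight

variable (s : ℝ) (k : ℤ)

theorem sobolevWeight_ne_zero : sobolevWeight s k ≠ 0 :=
  (ENNReal.ofReal_pos.mpr (by positivity)).ne'

theorem sobolevWeight_ne_top : sobolevWeight s k ≠ ∞ := ENNReal.ofReal_ne_top

theorem sobolevWeight_sq : sobolevWeight s k ^ 2 = ENNReal.ofReal ((1 + (k : ℝ) ^ 2) ^ s) := by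
  rw [sobolevWeight, ← ENNReal.ofReal_pow (by positivity), ← Real.rpow_natCast,
    ← Real.rpow_mul (by positivity)]
  norm_num

theorem inv_sobolevWeight_sq :
    (sobolevWeight s k)⁻¹ ^ 2 = ENNReal.ofReal ((1 + (k : ℝ) ^ 2) ^ (-s)) := by
  rw [← ENNReal.inv_pow, sobolevWeight_sq, ← ENNReal.ofReal_inv_of_pos (by positivity),
    Real.rpow_neg (by positivity)]

theorem sobolevWeight_sq_mul_enorm_sq {F : Type*} [SeminormedAddGroup F] (z : F) :
    sobolevWeight s k ^ 2 * ‖z‖ₑ ^ 2 = ENNReal.ofReal ((1 + (k : ℝ) ^ 2) ^ s * ‖z‖ ^ 2) := by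
  rw [sobolevWeight_sq, ENNReal.ofReal_mul (by positivity), ENNReal.ofReal_pow (norm_nonneg _),
    ofReal_norm]

theorem tsum_sobolevWeight_sq_mul_enorm_sq {F : Type*} [SeminormedAddGroup F] {x : ℤ → F}
    (hx : Summable fun k : ℤ => (1 + (k : ℝ) ^ 2) ^ s * ‖x k‖ ^ 2) :
    ∑' k, sobolevWeight s k ^ 2 * ‖x k‖ₑ ^ 2 =
      ENNReal.ofReal (∑' k : ℤ, (1 + (k : ℝ) ^ 2) ^ s * ‖x k‖ ^ 2) := by
  simp only [sobolevWeight_sq_mul_enorm_sq]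
  exact (ENNReal.ofReal_tsum_of_nonneg (fun _ => by positivity) hx).symm

variable {s}

theorem sobolevWeight_add_le (hs : 0 ≤ s) (i j : ℤ) :
    sobolevWeight s (i + j) ≤ ENNReal.ofReal (2 ^ s) * (sobolevWeight s i + sobolevWeight s j) := by
  have h4 : (4 : ℝ) ^ (s / 2) = 2 ^ s := by
    rw [show (4 : ℝ) = 2 ^ (2 : ℝ) by norm_num, ← Real.rpow_mul (by norm_num)]
    ring_nf
  rw [sobolevWeight, sobolevWeight, sobolevWeight, ← ENNReal.ofReal_add (by positivity)
    (by positivity), ← ENNReal.ofReal_mul (by positivity), Int.cast_add, ← h4]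
  exact ENNReal.ofReal_le_ofReal (one_add_sq_add_rpow_le _ _ (by linarith))

theorem sq_tsum_le_tsum_sobolevWeight_sq_mul (hs : 1 / 2 < s) (z : ℤ → ℝ≥0∞) :
    (∑' i, z i) ^ 2 ≤ ENNReal.ofReal (∑' k : ℤ, (1 + (k : ℝ) ^ 2) ^ (-s)) *
      ∑' i, sobolevWeight s i ^ 2 * z i ^ 2 := by
  rw [ENNReal.ofReal_tsum_of_nonneg (fun _ => by positivity) (summable_one_add_sq_rpow_neg hs)]
  simp only [← inv_sobolevWeight_sq]
  exact ENNReal.sq_tsum_le_tsum_inv_sq_mul (sobolevWeight_ne_zero s) (sobolevWeight_ne_top s) z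

end SobolevWeight

section WeightedConvolution

variable {G : Type*} [AddCommGroup G] {w : G → ℝ≥0∞} {E : ℝ≥0∞}

theorem weight_mul_tsum_mul_sub_le (hw : ∀ i j, w (i + j) ≤ E * (w i + w j))
    (x y : G → ℝ≥0∞) (l : G) :
    w l * ∑' i, x i * y (l - i) ≤
      E * (∑' i, w i * x i * y (l - i) + ∑' i, w i * y i * x (l - i)) := by
  have hflip : ∑' i, x i * (w (l - i) * y (l - i)) = ∑' i, w i * y i * x (l - i) := by
    rw [← (Equiv.subLeft l).tsum_eq]
    simp only [Equiv.subLeft_apply, sub_sub_cancel]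
    exact tsum_congr fun i => by ring
  calc w l * ∑' i, x i * y (l - i) = ∑' i, w (i + (l - i)) * (x i * y (l - i)) := by
        simp only [add_sub_cancel, ENNReal.tsum_mul_left]
    _ ≤ ∑' i, E * (w i + w (l - i)) * (x i * y (l - i)) :=
        ENNReal.tsum_le_tsum fun i => by gcongr; exact hw _ _
    _ = E * (∑' i, w i * x i * y (l - i) + ∑' i, x i * (w (l - i) * y (l - i))) := by
        rw [← ENNReal.tsum_add, ← ENNReal.tsum_mul_left]
        exact tsum_congr fun i => by ring
    _ = _ := by rw [hflip]

theorem tsum_weight_sq_mul_tsum_mul_sub_sq_le (hw : ∀ i j, w (i + j) ≤ E * (w i + w j))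
    {C : ℝ≥0∞} (hC : ∀ z : G → ℝ≥0∞, (∑' i, z i) ^ 2 ≤ C * ∑' i, w i ^ 2 * z i ^ 2)
    (x y : G → ℝ≥0∞) :
    ∑' l, w l ^ 2 * (∑' i, x i * y (l - i)) ^ 2 ≤
      4 * E ^ 2 * C * (∑' i, w i ^ 2 * x i ^ 2) * ∑' i, w i ^ 2 * y i ^ 2 := by
  have hyoung : ∀ a b : G → ℝ≥0∞, ∑' l, (∑' i, w i * a i * b (l - i)) ^ 2 ≤
      C * (∑' i, w i ^ 2 * a i ^ 2) * ∑' i, w i ^ 2 * b i ^ 2 := by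
    intro a b
    calc ∑' l, (∑' i, w i * a i * b (l - i)) ^ 2 ≤ (∑' j, b j) ^ 2 * ∑' i, (w i * a i) ^ 2 :=
          ENNReal.tsum_sq_tsum_mul_sub_le _ _
      _ ≤ C * (∑' i, w i ^ 2 * b i ^ 2) * ∑' i, (w i * a i) ^ 2 := by gcongr; exact hC b
      _ = _ := by simp only [mul_pow]; ring
  set P := fun l => ∑' i, w i * x i * y (l - i)
  set Q := fun l => ∑' i, w i * y i * x (l - i)
  calc ∑' l, w l ^ 2 * (∑' i, x i * y (l - i)) ^ 2
      ≤ ∑' l, 2 * E ^ 2 * (P l ^ 2 + Q l ^ 2) := by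
        refine ENNReal.tsum_le_tsum fun l => ?_
        calc w l ^ 2 * (∑' i, x i * y (l - i)) ^ 2 ≤ (E * (P l + Q l)) ^ 2 := by
              rw [← mul_pow]
              exact pow_le_pow_left₀ zero_le (weight_mul_tsum_mul_sub_le hw x y l) 2
          _ ≤ E ^ 2 * (2 * (P l ^ 2 + Q l ^ 2)) := by
              rw [mul_pow]; gcongr; exact ENNReal.add_sq_le_two_mul _ _
          _ = _ := by ring
    _ = 2 * E ^ 2 * (∑' l, P l ^ 2 + ∑' l, Q l ^ 2) := by
        rw [ENNReal.tsum_mul_left, ENNReal.tsum_add]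
    _ ≤ 2 * E ^ 2 * (C * (∑' i, w i ^ 2 * x i ^ 2) * (∑' i, w i ^ 2 * y i ^ 2) +
          C * (∑' i, w i ^ 2 * y i ^ 2) * (∑' i, w i ^ 2 * x i ^ 2)) := by
        gcongr
        exacts [hyoung x y, hyoung y x]
    _ = _ := by ring

end WeightedConvolution

theorem summable_and_tsum_le_of_tsum_ofReal_le {ι : Type*} {f : ι → ℝ} (hf : ∀ i, 0 ≤ f i)
    {b : ℝ} (hb : 0 ≤ b) (h : ∑' i, ENNReal.ofReal (f i) ≤ ENNReal.ofReal b) :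
    Summable f ∧ ∑' i, f i ≤ b := by
  have hsum : Summable f := by
    simpa only [ENNReal.toReal_ofReal (hf _)] using
      ENNReal.summable_toReal (ne_top_of_le_ne_top ENNReal.ofReal_ne_top h)
  refine ⟨hsum, ?_⟩
  rwa [← ENNReal.ofReal_le_ofReal_iff hb, ENNReal.ofReal_tsum_of_nonneg hf hsum]

noncomputable def sobolevAlgebraConst (s : ℝ) : ℝ :=
  4 * (2 ^ s) ^ 2 * ∑' k : ℤ, (1 + (k : ℝ) ^ 2) ^ (-s)

theorem sobolevAlgebraConst_pos {s : ℝ} (hs : 1 / 2 < s) : 0 < sobolevAlgebraConst s := by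
  have := (summable_one_add_sq_rpow_neg hs).tsum_pos (fun _ => by positivity) 0 (by norm_num)
  unfold sobolevAlgebraConst
  positivity

theorem summable_conv_and_tsum_sq_le {R : Type*} [NormedRing R] [NormMulClass R] [CompleteSpace R]
    {s : ℝ} (hs : 1 / 2 < s) {x y : ℤ → R}
    (hx : Summable fun k : ℤ => (1 + (k : ℝ) ^ 2) ^ s * ‖x k‖ ^ 2)
    (hy : Summable fun k : ℤ => (1 + (k : ℝ) ^ 2) ^ s * ‖y k‖ ^ 2) :
    (∀ l, Summable fun i => x i * y (l - i)) ∧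
      Summable (fun l : ℤ => (1 + (l : ℝ) ^ 2) ^ s * ‖∑' i, x i * y (l - i)‖ ^ 2) ∧
      ∑' l : ℤ, (1 + (l : ℝ) ^ 2) ^ s * ‖∑' i, x i * y (l - i)‖ ^ 2 ≤
        sobolevAlgebraConst s * (∑' k : ℤ, (1 + (k : ℝ) ^ 2) ^ s * ‖x k‖ ^ 2) *
          ∑' k : ℤ, (1 + (k : ℝ) ^ 2) ^ s * ‖y k‖ ^ 2 := by
  set A := ∑' k : ℤ, (1 + (k : ℝ) ^ 2) ^ s * ‖x k‖ ^ 2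
  set B := ∑' k : ℤ, (1 + (k : ℝ) ^ 2) ^ s * ‖y k‖ ^ 2
  have hK := (sobolevAlgebraConst_pos hs).le
  have hA : 0 ≤ A := tsum_nonneg fun _ => by positivity
  have hB : 0 ≤ B := tsum_nonneg fun _ => by positivity
  have hmain := tsum_weight_sq_mul_tsum_mul_sub_sq_le (sobolevWeight_add_le (by linarith))
    (sq_tsum_le_tsum_sobolevWeight_sq_mul hs) (‖x ·‖ₑ) (‖y ·‖ₑ)
  rw [tsum_sobolevWeight_sq_mul_enorm_sq s hx, tsum_sobolevWeight_sq_mul_enorm_sq s hy,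
    ← ENNReal.ofReal_pow (by positivity), ← ENNReal.ofReal_ofNat,
    ← ENNReal.ofReal_mul (by norm_num), ← ENNReal.ofReal_mul (by positivity),
    ← sobolevAlgebraConst.eq_1, ← ENNReal.ofReal_mul hK,
    ← ENNReal.ofReal_mul (mul_nonneg hK hA)] at hmain
  -- The `l`-th term of the finite sum `hmain` is finite and its weight is nonzero.
  have hconv : ∀ l, Summable fun i => x i * y (l - i) := by
    intro l
    refine Summable.of_enorm fun htop => ?_
    have hl := (ENNReal.le_tsum l).trans hmain
    simp only [enorm_mul] at htop
    simp [htop, sobolevWeight_ne_zero] at hl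
  have hle : ∑' l : ℤ, ENNReal.ofReal ((1 + (l : ℝ) ^ 2) ^ s * ‖∑' i, x i * y (l - i)‖ ^ 2) ≤
      ENNReal.ofReal (sobolevAlgebraConst s * A * B) := by
    simp only [← sobolevWeight_sq_mul_enorm_sq]
    refine le_trans (ENNReal.tsum_le_tsum fun l => ?_) hmain
    gcongr
    exact enorm_tsum_le_tsum_enorm.trans_eq (by simp only [enorm_mul])
  exact ⟨hconv, summable_and_tsum_le_of_tsum_ofReal_le (fun _ => by positivity)
    (mul_nonneg (mul_nonneg hK hA) hB) hle⟩

/-- For every real `s > 1/2` there exists `c_s > 0` such that for all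
`x, y ∈ ℓ²_s` the convolution `x ⋆ y` belongs to `ℓ²_s` and `‖x ⋆ y‖_s ≤ c_s ‖x‖_s ‖y‖_s`.
Here `‖x‖_s² = ∑_{k ∈ ℤ} (1 + |k|²)^s ‖x k‖²` and `(x ⋆ y)_ℓ = ∑_{i + j = ℓ} x_i y_j`. -/
theorem convolution_algebra_weighted_l2 (s : ℝ) (hs : 1 / 2 < s) :
    ∃ c : ℝ, 0 < c ∧ ∀ x y : ℤ → ℂ,
      Summable (fun k : ℤ => (1 + (k : ℝ) ^ 2) ^ s * ‖x k‖ ^ 2) →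
      Summable (fun k : ℤ => (1 + (k : ℝ) ^ 2) ^ s * ‖y k‖ ^ 2) →
      (∀ l : ℤ, Summable (fun i : ℤ => x i * y (l - i))) ∧
      Summable (fun l : ℤ => (1 + (l : ℝ) ^ 2) ^ s * ‖∑' i : ℤ, x i * y (l - i)‖ ^ 2) ∧
      Real.sqrt (∑' l : ℤ, (1 + (l : ℝ) ^ 2) ^ s * ‖∑' i : ℤ, x i * y (l - i)‖ ^ 2) ≤
        c * Real.sqrt (∑' k : ℤ, (1 + (k : ℝ) ^ 2) ^ s * ‖x k‖ ^ 2) *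
          Real.sqrt (∑' k : ℤ, (1 + (k : ℝ) ^ 2) ^ s * ‖y k‖ ^ 2) := by
  refine ⟨Real.sqrt (sobolevAlgebraConst s), Real.sqrt_pos.2 (sobolevAlgebraConst_pos hs),
    fun x y hx hy => ?_⟩
  obtain ⟨hconv, hsum, hle⟩ := summable_conv_and_tsum_sq_le hs hx hy
  refine ⟨hconv, hsum, ?_⟩
  have hK := (sobolevAlgebraConst_pos hs).le
  rw [← Real.sqrt_mul hK, ← Real.sqrt_mul (mul_nonneg hK (tsum_nonneg fun _ => by positivity))]
  exact Real.sqrt_le_sqrt hle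
end

section
/- Let n ≥ 1, R > 0, δ > 0, and let D ⊆ ℝⁿ be a bounded measurable set with diameter at most R. Let f : ℝⁿ → ℝ be continuously differentiable and suppose there is a unit vector 𝔷 ∈ ℝⁿ such that ∇f(ρ)·𝔷 ≥ δ for every ρ in the closed convex hull of D. Then there exists a constant C > 0, depending only on n and R, such that for every ε > 0 the Lebesgue measure of {ρ ∈ D : |f(ρ)| < ε} is at most C ε/δ. -/
/-!
Take orthonormal coordinates `(t, y) ∈ ℝ × ℝⁿ⁻¹` with `t` measured along `z`. Wherever a line
`y = const` meets the convex hull of `D`, `f` grows along it at rate at least `δ`, so the line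
meets the sublevel set in a set of diameter at most `2ε/δ`. The lines that meet `D` at all are
indexed by the projection of `D` to `ℝⁿ⁻¹`; with the sup norm on `ℝⁿ⁻¹` this projection is
1-Lipschitz, so its image has diameter at most `R` and hence volume at most `Rⁿ⁻¹`. Fubini gives
the bound with `C = 2 Rⁿ⁻¹`.
-/

open MeasureTheory

theorem volume_abs_lt_le_of_le_deriv {T : Set ℝ} (hT : Convex ℝ T) {g : ℝ → ℝ}
    (hg : Differentiable ℝ g) {δ : ℝ} (hδ : 0 < δ) (hg' : ∀ t ∈ T, δ ≤ deriv g t) (ε : ℝ) :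
    volume {t ∈ T | |g t| < ε} ≤ ENNReal.ofReal (2 * ε / δ) := by
  have hgrowth := hT.mul_sub_le_image_sub_of_le_deriv hg.continuous.continuousOn
    hg.differentiableOn fun t ht => hg' t (interior_subset ht)
  have hgap : ∀ ⦃s⦄, s ∈ {t ∈ T | |g t| < ε} → ∀ ⦃t⦄, t ∈ {t ∈ T | |g t| < ε} → s ≤ t →
      t - s ≤ 2 * ε / δ := by
    rintro s ⟨hsT, hs⟩ t ⟨htT, ht⟩ hst
    have := hgrowth s hsT t htT hst
    rw [le_div_iff₀ hδ]
    linarith [abs_lt.1 hs, abs_lt.1 ht]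
  refine (Real.volume_le_diam _).trans (Metric.ediam_le_of_forall_dist_le fun s hs t ht => ?_)
  rw [Real.dist_eq, abs_le]
  rcases le_total s t with hst | hts
  · have := hgap hs ht hst; constructor <;> linarith
  · have := hgap ht hs hts; constructor <;> linarith

theorem convex_setOf_add_smul_mem {E : Type*} [AddCommGroup E] [Module ℝ E] {K : Set E}
    (hK : Convex ℝ K) (c z : E) : Convex ℝ {t : ℝ | c + t • z ∈ K} := by
  intro s hs t ht a b ha hb hab
  have : c + (a • s + b • t) • z = a • (c + s • z) + b • (c + t • z) := by
    linear_combination (norm := module) -(hab • c)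
  simpa only [Set.mem_ofPred_eq, this] using hK hs ht ha hb hab

theorem volume_line_sublevel_le {E : Type*} [NormedAddCommGroup E] [NormedSpace ℝ E]
    {f : E → ℝ} (hf : Differentiable ℝ f) {D : Set E} {z : E} {δ : ℝ} (hδ : 0 < δ)
    (hder : ∀ ρ ∈ convexHull ℝ D, δ ≤ fderiv ℝ f ρ z) (c : E) (ε : ℝ) :
    volume {t : ℝ | c + t • z ∈ D ∧ |f (c + t • z)| < ε} ≤ ENNReal.ofReal (2 * ε / δ) := by
  have hderiv_line (t : ℝ) :
      HasDerivAt (fun s : ℝ => f (c + s • z)) (fderiv ℝ f (c + t • z) z) t :=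
    (hf _).hasFDerivAt.comp_hasDerivAt t
      (((hasDerivAt_id t).smul_const z).const_add c |>.congr_deriv (one_smul ℝ z))
  calc volume {t : ℝ | c + t • z ∈ D ∧ |f (c + t • z)| < ε}
      ≤ volume {t ∈ {t : ℝ | c + t • z ∈ convexHull ℝ D} | |f (c + t • z)| < ε} :=
        measure_mono fun t ht => ⟨subset_convexHull ℝ D ht.1, ht.2⟩
    _ ≤ ENNReal.ofReal (2 * ε / δ) :=
        volume_abs_lt_le_of_le_deriv (convex_setOf_add_smul_mem (convex_convexHull ℝ D) c z)
          (fun t => (hderiv_line t).differentiableAt) hδ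
          (fun t ht => (hderiv_line t).deriv ▸ hder _ ht) ε

theorem measure_le_mul_of_forall_slice_le {α β γ : Type*} [MeasurableSpace α]
    [MeasurableSpace β] [MeasurableSpace γ] {μ : Measure α} {ν : Measure β} [SFinite μ]
    [SFinite ν] {ρ : Measure γ} {Φ : α × β → γ} (hΦ : MeasurePreserving Φ (μ.prod ν) ρ)
    {A : Set γ} (hA : MeasurableSet A) {a : ENNReal} (B : Set β)
    (hslice : ∀ y, μ {x | Φ (x, y) ∈ A} ≤ a) (hB : ∀ x y, Φ (x, y) ∈ A → y ∈ B) :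
    ρ A ≤ a * ν B :=
  calc ρ A = μ.prod ν (Φ ⁻¹' A) := (hΦ.measure_preimage hA.nullMeasurableSet).symm
    _ = ∫⁻ y, μ {x | Φ (x, y) ∈ A} ∂ν := Measure.prod_apply_symm (hΦ.measurable hA)
    _ ≤ ∫⁻ y, B.indicator (fun _ => a) y ∂ν := by
      refine lintegral_mono fun y => ?_
      by_cases hy : y ∈ B
      · simpa [Set.indicator_of_mem hy] using hslice y
      · have : {x | Φ (x, y) ∈ A} = ∅ := Set.eq_empty_of_forall_notMem fun x hx => hy (hB x y hx)
        simp [this]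
    _ ≤ a * ν B := lintegral_indicator_const_le B a

theorem exists_measurePreserving_coordinates_of_norm_eq_one {F : Type*}
    [NormedAddCommGroup F] [InnerProductSpace ℝ F] [FiniteDimensional ℝ F] [MeasurableSpace F]
    [BorelSpace F] {m : ℕ} (hF : Module.finrank ℝ F = m + 1) {z : F} (hz : ‖z‖ = 1) :
    ∃ (Φ : ℝ × (Fin m → ℝ) → F) (P : F → Fin m → ℝ),
      MeasurePreserving Φ (volume.prod volume) volume ∧ LipschitzWith 1 P ∧
      (∀ t y, Φ (t, y) = Φ (0, y) + t • z) ∧ ∀ t y, P (Φ (t, y)) = y := by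
  obtain ⟨b, hb⟩ := Orthonormal.exists_orthonormalBasis_extension_of_card_eq
    (ι := Fin (m + 1)) (by simpa using hF) (v := fun _ => z) (s := {0})
    ⟨fun _ => hz, fun {i j} h => absurd (Subsingleton.elim i j) h⟩
  have hbz : b.repr z = EuclideanSpace.single 0 1 := by rw [← hb 0 rfl, b.repr_self]
  refine ⟨b.repr.symm ∘ WithLp.toLp 2 ∘ (MeasurableEquiv.piFinSuccAbove (fun _ => ℝ) 0).symm,
    fun x j => b.repr x j.succ, ?_, ?_, fun t y => ?_, fun t y => ?_⟩
  · exact (b.measurePreserving_repr_symm.comp (PiLp.volume_preserving_toLp (Fin (m + 1)))).comp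
      (volume_preserving_piFinSuccAbove (fun _ => ℝ) 0).symm
  · refine LipschitzWith.of_dist_le_mul fun x x' => ?_
    rw [NNReal.coe_one, one_mul, dist_eq_norm, dist_eq_norm]
    refine (pi_norm_le_iff_of_nonneg (norm_nonneg _)).2 fun j => ?_
    rw [Pi.sub_apply, ← PiLp.sub_apply, ← map_sub, ← b.repr.norm_map (x - x')]
    exact PiLp.norm_apply_le _ _
  · apply b.repr.injective
    ext i
    refine Fin.cases ?_ (fun j => ?_) i <;> simp [hbz, Fin.succ_ne_zero]
  · simp

/-- Let `n ≥ 1`, `R > 0`. There is `C > 0` depending only on `n` and `R` such that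
for every `δ > 0`, every bounded measurable `D ⊆ ℝⁿ` of diameter at most `R`, every `C¹`
function `f : ℝⁿ → ℝ` admitting a unit vector `z` with `∇f(ρ)·z ≥ δ` on the closed convex hull
of `D`, and every `ε > 0`, the Lebesgue measure of `{ρ ∈ D : |f ρ| < ε}` is at most `C ε / δ`. -/
theorem measure_sublevel_of_directional_deriv_lower_bound
    (n : ℕ) (hn : 1 ≤ n) (R : ℝ) (hR : 0 < R) :
    ∃ C : ℝ, 0 < C ∧
      ∀ (δ : ℝ), 0 < δ →
      ∀ D : Set (EuclideanSpace ℝ (Fin n)),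
        Bornology.IsBounded D → MeasurableSet D → Metric.diam D ≤ R →
      ∀ f : EuclideanSpace ℝ (Fin n) → ℝ, ContDiff ℝ 1 f →
      ∀ z : EuclideanSpace ℝ (Fin n), ‖z‖ = 1 →
        (∀ ρ ∈ closure (convexHull ℝ D), δ ≤ fderiv ℝ f ρ z) →
      ∀ ε : ℝ, 0 < ε →
        volume {ρ ∈ D | |f ρ| < ε} ≤ ENNReal.ofReal (C * ε / δ) := by
  obtain ⟨m, rfl⟩ : ∃ m, n = m + 1 := ⟨n - 1, by omega⟩
  refine ⟨2 * R ^ m, by positivity, fun δ hδ D hDb hDm hDdiam f hf z hz hder ε _ => ?_⟩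
  obtain ⟨Φ, P, hΦ, hP, hΦline, hPΦ⟩ :=
    exists_measurePreserving_coordinates_of_norm_eq_one (finrank_euclideanSpace_fin) hz
  have hA : MeasurableSet {ρ ∈ D | |f ρ| < ε} :=
    hDm.inter (measurableSet_lt hf.continuous.abs.measurable measurable_const)
  have hslice (y : Fin m → ℝ) :
      volume {t | Φ (t, y) ∈ {ρ ∈ D | |f ρ| < ε}} ≤ ENNReal.ofReal (2 * ε / δ) := by
    have hslice_eq : {t | Φ (t, y) ∈ {ρ ∈ D | |f ρ| < ε}} =
        {t | Φ (0, y) + t • z ∈ D ∧ |f (Φ (0, y) + t • z)| < ε} :=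
      Set.ext fun t => by rw [Set.mem_ofPred_eq, hΦline t y]; rfl
    rw [hslice_eq]
    exact volume_line_sublevel_le (hf.differentiable one_ne_zero) hδ
      (fun ρ hρ => hder ρ (subset_closure hρ)) _ ε
  have hdiam : Metric.ediam (P '' D) ≤ ENNReal.ofReal R :=
    (hP.ediam_image_le D).trans <| by
      simpa using Metric.ediam_le_of_forall_dist_le fun x hx y hy =>
        (Metric.dist_le_diam_of_mem hDb hx hy).trans hDdiam
  calc volume {ρ ∈ D | |f ρ| < ε}
      ≤ ENNReal.ofReal (2 * ε / δ) * volume (P '' D) :=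
        measure_le_mul_of_forall_slice_le hΦ hA _ hslice fun t y h => ⟨_, h.1, hPΦ t y⟩
    _ ≤ ENNReal.ofReal (2 * ε / δ) * ENNReal.ofReal R ^ m := by
        gcongr
        exact (Real.volume_pi_le_diam_pow _).trans (by simpa using pow_le_pow_left' hdiam m)
    _ = ENNReal.ofReal (2 * R ^ m * ε / δ) := by
        rw [← ENNReal.ofReal_pow hR.le, ← ENNReal.ofReal_mul (by positivity)]
        ring_nf
end

section
/- Let E be a Banach space, C > 0, ε > 0 with 8Cε² ≤ 1, and let X : B(0,4ε) → E be a locally Lipschitz map satisfying ‖X(z)‖ ≤ C‖z‖³ for all z in the open ball B(0,4ε) ⊆ E. Then for every z₀ ∈ E with ‖z₀‖ ≤ ε, the initial value problem φ'(t) = X(φ(t)), φ(0) = z₀ has a (unique) solution φ defined on the whole interval [0,1], and this solution satisfies ‖φ(s)‖ ≤ (1+s)‖z₀‖ ≤ 2‖z₀‖ and ‖φ(s) − z₀‖ ≤ 8C s ‖z₀‖³ for all s ∈ [0,1]. -/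
/-!
Precompose `X` with the radial retraction onto `closedBall 0 (2‖z₀‖)`, which is `2`-Lipschitz.
The resulting field is locally Lipschitz on all of `E` and bounded by `8C‖z₀‖³`, so its solution
from `z₀` exists on every interval `[0, T]`: a bounded field cannot blow up, because the
endpoints of solutions on `[0, T)` converge and Picard–Lindelöf restarts from the limit. The mean
value inequality gives `‖φ s - z₀‖ ≤ 8Cs‖z₀‖³ ≤ s‖z₀‖`, so `φ` never leaves the ball on which the
retraction is the identity, and `φ` solves the original equation. Uniqueness holds because `φ`
stays in `B(0, 4ε)`, where local Lipschitz uniqueness propagates along `[0, 1]` by continuous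
induction.
-/

open Set Metric Filter Topology

lemma LocallyLipschitzOn.comp_locallyLipschitz {α β γ : Type*} [PseudoEMetricSpace α]
    [PseudoEMetricSpace β] [PseudoEMetricSpace γ] {f : β → γ} {g : α → β} {s : Set β}
    (hf : LocallyLipschitzOn s f) (hg : LocallyLipschitz g) (hgs : ∀ x, g x ∈ s) :
    LocallyLipschitz (f ∘ g) := by
  intro x
  obtain ⟨Kf, t, ht, hft⟩ := hf (hgs x)
  obtain ⟨Kg, u, hu, hgu⟩ := hg x
  have hgt : g ⁻¹' t ∈ 𝓝 x :=
    tendsto_nhdsWithin_iff.2 ⟨hg.continuous.continuousAt, .of_forall hgs⟩ ht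
  exact ⟨Kf * Kg, u ∩ g ⁻¹' t, inter_mem hu hgt,
    hft.comp (hgu.mono inter_subset_left) fun _ hy ↦ hy.2⟩

section

variable {E : Type*} [NormedAddCommGroup E] [NormedSpace ℝ E] {X : E → E}

noncomputable def radialRetraction (R : ℝ) (z : E) : E := (R / max R ‖z‖) • z

lemma norm_radialRetraction_le {R : ℝ} (hR : 0 ≤ R) (z : E) : ‖radialRetraction R z‖ ≤ R := by
  rw [radialRetraction, norm_smul, Real.norm_of_nonneg (by positivity)]
  rcases hR.eq_or_lt with rfl | hR
  · simp
  rw [div_mul_eq_mul_div, div_le_iff₀ (lt_max_of_lt_left hR)]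
  exact mul_le_mul_of_nonneg_left (le_max_right _ _) hR.le

lemma radialRetraction_of_norm_le {R : ℝ} {z : E} (hz : ‖z‖ ≤ R) : radialRetraction R z = z := by
  rcases (norm_nonneg z).trans hz |>.eq_or_lt with hR | hR
  · rw [← hR, norm_le_zero_iff] at hz
    simp [radialRetraction, hz]
  · simp [radialRetraction, max_eq_left hz, hR.ne']

lemma lipschitzWith_radialRetraction {R : ℝ} (hR : 0 ≤ R) :
    LipschitzWith 2 (radialRetraction (E := E) R) := by
  rcases hR.eq_or_lt with rfl | hR
  · have hzero : radialRetraction (E := E) 0 = fun _ ↦ 0 := by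
      funext z; simp [radialRetraction]
    rw [hzero]
    exact (LipschitzWith.const 0).weaken (by norm_num)
  refine LipschitzWith.of_dist_le_mul fun x y ↦ ?_
  wlog hxy : ‖y‖ ≤ ‖x‖ generalizing x y
  · rw [dist_comm, dist_comm x]; exact this y x (le_of_not_ge hxy)
  set mx := max R ‖x‖
  set my := max R ‖y‖
  have hmy : 0 < my := lt_max_of_lt_left hR
  have hmxy : my ≤ mx := max_le_max le_rfl hxy
  have hmx : 0 < mx := hmy.trans_le hmxy
  have hcx : R / mx ≤ 1 := (div_le_one hmx).2 (le_max_left _ _)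
  have hfactor : (R / my - R / mx) * ‖y‖ ≤ ‖x - y‖ := calc
    (R / my - R / mx) * ‖y‖ ≤ (R / my - R / mx) * my := by
      gcongr
      · exact sub_nonneg.2 (div_le_div_of_nonneg_left hR.le hmy hmxy)
      · exact le_max_right _ _
    _ = R / mx * (mx - my) := by field_simp
    _ ≤ 1 * (mx - my) := by gcongr
    _ ≤ ‖x - y‖ := by
      have := norm_sub_norm_le x y
      have : mx ≤ my + ‖x - y‖ :=
        max_le (by linarith [le_max_left R ‖y‖, norm_nonneg (x - y)])
          (by linarith [le_max_right R ‖y‖])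
      linarith
  have hsplit : radialRetraction R x - radialRetraction R y =
      (R / mx) • (x - y) - (R / my - R / mx) • y := by
    simp only [radialRetraction, smul_sub, sub_smul]; abel
  rw [dist_eq_norm, dist_eq_norm, hsplit]
  calc _ ≤ ‖(R / mx) • (x - y)‖ + ‖(R / my - R / mx) • y‖ := norm_sub_le _ _
    _ = R / mx * ‖x - y‖ + (R / my - R / mx) * ‖y‖ := by
      rw [norm_smul, norm_smul, Real.norm_of_nonneg (by positivity),
        Real.norm_of_nonneg (sub_nonneg.2 (div_le_div_of_nonneg_left hR.le hmy hmxy))]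
    _ ≤ 1 * ‖x - y‖ + ‖x - y‖ := by gcongr
    _ = 2 * ‖x - y‖ := by ring

lemma LocallyLipschitzOn.comp_radialRetraction {U : Set E} (hX : LocallyLipschitzOn U X) {R : ℝ}
    (hR : 0 ≤ R) (hRU : closedBall 0 R ⊆ U) : LocallyLipschitz (X ∘ radialRetraction R) :=
  hX.comp_locallyLipschitz (lipschitzWith_radialRetraction hR).locallyLipschitz fun z ↦
    hRU (mem_closedBall_zero_iff.2 (norm_radialRetraction_le hR z))

theorem LocallyLipschitz.exists_forall_mem_closedBall_exists_eq_forall_mem_Ioo_hasDerivAt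
    [CompleteSpace E] (hX : LocallyLipschitz X) (x₀ : E) :
    ∃ r > (0 : ℝ), ∃ δ > (0 : ℝ), ∀ x ∈ closedBall x₀ r, ∀ t₀ : ℝ, ∃ α : ℝ → E, α t₀ = x ∧
      ∀ t ∈ Ioo (t₀ - δ) (t₀ + δ), HasDerivAt α (X (α t)) t := by
  obtain ⟨K, s, hs, hXs⟩ := hX x₀
  obtain ⟨a, ha, has⟩ := Metric.mem_nhds_iff.1 hs
  have hsub : closedBall x₀ (a / 2) ⊆ s := (closedBall_subset_ball (half_lt_self ha)).trans has
  set L := K * a + ‖X x₀‖ + 1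
  have hL0 : 0 < L := by positivity
  have hXL : ∀ x ∈ closedBall x₀ (a / 2), ‖X x‖ ≤ L := fun x hx ↦ calc
    ‖X x‖ ≤ ‖X x₀‖ + K * ‖x - x₀‖ := by
      have := (hXs.norm_sub_le (hsub hx) (hsub (mem_closedBall_self (by positivity))))
      linarith [norm_le_norm_sub_add (X x) (X x₀)]
    _ ≤ ‖X x₀‖ + K * a := by
      gcongr; exact (mem_closedBall_iff_norm.1 hx).trans (half_le_self ha.le)
    _ ≤ L := by linarith
  refine ⟨a / 4, by positivity, a / (4 * L), by positivity, fun x hx t₀ ↦ ?_⟩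
  have hpl : IsPicardLindelof (fun _ ↦ X) (tmin := t₀ - a / (4 * L)) (tmax := t₀ + a / (4 * L))
      ⟨t₀, by constructor <;> linarith [show 0 < a / (4 * L) by positivity]⟩ x₀
      ⟨a / 2, by positivity⟩ ⟨a / 4, by positivity⟩ ⟨L, hL0.le⟩ K := by
    refine .of_time_independent hXL (hXs.mono hsub) ?_
    change L * max (t₀ + a / (4 * L) - t₀) (t₀ - (t₀ - a / (4 * L))) ≤ a / 2 - a / 4
    rw [add_sub_cancel_left, sub_sub_cancel, max_self]
    field_simp
    linarith
  obtain ⟨α, hα₀, hα⟩ := hpl.exists_eq_forall_mem_Icc_hasDerivWithinAt hx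
  exact ⟨α, hα₀, fun t ht ↦ (hα t (Ioo_subset_Icc_self ht)).hasDerivAt (Icc_mem_nhds ht.1 ht.2)⟩

theorem LocallyLipschitzOn.eqOn_Icc_of_hasDerivAt {U : Set E} (hU : IsOpen U)
    (hX : LocallyLipschitzOn U X) {φ ψ : ℝ → E} {a b : ℝ}
    (hφ : ∀ t ∈ Icc a b, HasDerivAt φ (X (φ t)) t) (hφU : ∀ t ∈ Icc a b, φ t ∈ U)
    (hψ : ∀ t ∈ Icc a b, HasDerivAt ψ (X (ψ t)) t) (ha : φ a = ψ a) :
    EqOn φ ψ (Icc a b) := by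
  have hφc : ContinuousOn φ (Icc a b) := fun t ht ↦ (hφ t ht).continuousAt.continuousWithinAt
  have hψc : ContinuousOn ψ (Icc a b) := fun t ht ↦ (hψ t ht).continuousAt.continuousWithinAt
  refine IsClosed.Icc_subset_of_forall_mem_nhdsWithin (s := {t | φ t = ψ t}) ?_ ha
    fun x ⟨hxs, hx⟩ ↦ ?_
  · have := (hφc.prodMk hψc).preimage_isClosed_of_isClosed isClosed_Icc isClosed_diagonal
    rwa [inter_comm] at this
  have hxab : x ∈ Icc a b := Ico_subset_Icc_self hx
  obtain ⟨K, s, hs, hXs⟩ := hX (hφU x hxab)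
  rw [nhdsWithin_eq_nhds.2 (hU.mem_nhds (hφU x hxab))] at hs
  have hnear : ∀ᶠ t in 𝓝 x, φ t ∈ s ∧ ψ t ∈ s :=
    ((hφ x hxab).continuousAt.eventually_mem hs).and
      ((hψ x hxab).continuousAt.eventually_mem (hxs ▸ hs))
  obtain ⟨ρ, hρ, hρs⟩ := Metric.eventually_nhds_iff_ball.1 hnear
  set c := min (x + ρ / 2) b
  have hxc : x < c := lt_min (by linarith) hx.2
  have hsub : Icc x c ⊆ Icc a b ∩ ball x ρ := fun t ht ↦
    ⟨⟨hxab.1.trans ht.1, ht.2.trans (min_le_right _ _)⟩, by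
      rw [Real.ball_eq_Ioo]
      constructor <;> linarith [ht.1, ht.2.trans (min_le_left _ _)]⟩
  have heq : EqOn φ ψ (Icc x c) :=
    ODE_solution_unique_of_mem_Icc_right (v := fun _ ↦ X) (s := fun _ ↦ s)
      (fun _ _ ↦ hXs) (hφc.mono fun t ht ↦ (hsub ht).1)
      (fun t ht ↦ (hφ t (hsub (Ico_subset_Icc_self ht)).1).hasDerivWithinAt)
      (fun t ht ↦ (hρs t (hsub (Ico_subset_Icc_self ht)).2).1)
      (hψc.mono fun t ht ↦ (hsub ht).1)
      (fun t ht ↦ (hψ t (hsub (Ico_subset_Icc_self ht)).1).hasDerivWithinAt)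
      (fun t ht ↦ (hρs t (hsub (Ico_subset_Icc_self ht)).2).2) hxs
  exact mem_of_superset (Icc_mem_nhdsGT hxc) heq

theorem HasDerivAt.ite_le {f g : ℝ → E} {f' : E} {a : ℝ} (hf : HasDerivAt f f' a)
    (hg : HasDerivAt g f' a) (h : f a = g a) :
    HasDerivAt (fun t ↦ if t ≤ a then f t else g t) f' a := by
  have hleft : HasDerivWithinAt (fun t ↦ if t ≤ a then f t else g t) f' (Iic a) a :=
    hf.hasDerivWithinAt.congr (fun t ht ↦ if_pos ht) (if_pos le_rfl)
  have hright : HasDerivWithinAt (fun t ↦ if t ≤ a then f t else g t) f' (Ici a) a := by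
    refine hg.hasDerivWithinAt.congr (fun t (ht : a ≤ t) ↦ ?_) (by simp [h])
    rcases ht.eq_or_lt with rfl | ht
    · simp [h]
    · simp [not_le.2 ht]
  simpa using hleft.union hright

theorem exists_forall_mem_Ico_hasDerivAt_of_glue {φ g : ℝ → E} {a T δ : ℝ} (haT : a ≤ T)
    (hδ : 0 < δ)
    (hφ : ∀ t ∈ Icc a T, HasDerivAt φ (X (φ t)) t)
    (hg : ∀ t ∈ Ioo (T - δ) (T + δ), HasDerivAt g (X (g t)) t) (hgT : g T = φ T) :
    ∃ ψ : ℝ → E, ψ a = φ a ∧ ∀ t ∈ Ico a (T + δ), HasDerivAt ψ (X (ψ t)) t := by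
  refine ⟨fun t ↦ if t ≤ T then φ t else g t, if_pos haT, fun t ht ↦ ?_⟩
  rcases lt_trichotomy t T with htT | rfl | htT
  · have hev : (fun t ↦ if t ≤ T then φ t else g t) =ᶠ[𝓝 t] φ :=
      (eventually_le_nhds htT).mono fun s hs ↦ if_pos hs
    simpa [htT.le] using (hφ t ⟨ht.1, htT.le⟩).congr_of_eventuallyEq hev
  · have hgt := hg t ⟨by linarith, by linarith⟩
    rw [hgT] at hgt
    simpa using (hφ t ⟨ht.1, le_rfl⟩).ite_le hgt hgT.symm
  · have hev : (fun t ↦ if t ≤ T then φ t else g t) =ᶠ[𝓝 t] g :=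
      (eventually_gt_nhds htT).mono fun s hs ↦ if_neg (not_le.2 hs)
    simpa [not_le.2 htT] using (hg t ⟨by linarith, ht.2⟩).congr_of_eventuallyEq hev

theorem LocallyLipschitz.cauchySeq_apply_of_forall_hasDerivAt (hX : LocallyLipschitz X) {M : ℝ}
    (hM : ∀ z, ‖X z‖ ≤ M) {u : ℕ → ℝ} (hu : Monotone u) (hu_cauchy : CauchySeq u)
    (hu₀ : 0 ≤ u 0) {x₀ : E} {φ : ℕ → ℝ → E} (hφ₀ : ∀ n, φ n 0 = x₀)
    (hφ : ∀ n, ∀ t ∈ Icc 0 (u n), HasDerivAt (φ n) (X (φ n t)) t) :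
    CauchySeq fun n ↦ φ n (u n) := by
  have hM₀ : 0 ≤ M := (norm_nonneg _).trans (hM x₀)
  have hdist : ∀ k n, k ≤ n → dist (φ n (u n)) (φ k (u k)) ≤ M * (u n - u k) := by
    intro k n hkn
    have hukn : u k ≤ u n := hu hkn
    have hagree : φ k (u k) = φ n (u k) :=
      (hX.locallyLipschitzOn.eqOn_Icc_of_hasDerivAt isOpen_univ (hφ k) (fun _ _ ↦ trivial)
        (fun t ht ↦ hφ n t ⟨ht.1, ht.2.trans hukn⟩) ((hφ₀ k).trans (hφ₀ n).symm))
        ⟨hu₀.trans (hu (Nat.zero_le k)), le_rfl⟩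
    rw [dist_eq_norm, hagree]
    exact norm_image_sub_le_of_norm_deriv_le_segment'
      (fun t ht ↦ (hφ n t ⟨hu₀.trans ((hu (Nat.zero_le k)).trans ht.1), ht.2⟩).hasDerivWithinAt)
      (fun t _ ↦ hM _) (u n) ⟨hukn, le_rfl⟩
  rw [Metric.cauchySeq_iff'] at hu_cauchy ⊢
  intro ε hε
  obtain ⟨N, hN⟩ := hu_cauchy (ε / (M + 1)) (by positivity)
  refine ⟨N, fun n hn ↦ (hdist N n hn).trans_lt ?_⟩
  have hun : u n - u N < ε / (M + 1) := by
    simpa [Real.dist_eq, abs_of_nonneg (sub_nonneg.2 (hu hn))] using hN n hn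
  calc M * (u n - u N) ≤ M * (ε / (M + 1)) := by gcongr
    _ < ε := by rw [mul_div_assoc', div_lt_iff₀ (by positivity)]; nlinarith

theorem LocallyLipschitz.exists_forall_mem_Icc_hasDerivAt_of_bounded [CompleteSpace E]
    (hX : LocallyLipschitz X) {M : ℝ} (hM : ∀ z, ‖X z‖ ≤ M) (x₀ : E) (T : ℝ) :
    ∃ φ : ℝ → E, φ 0 = x₀ ∧ ∀ t ∈ Icc 0 T, HasDerivAt φ (X (φ t)) t := by
  set S := {T : ℝ | 0 ≤ T ∧ ∃ φ : ℝ → E, φ 0 = x₀ ∧ ∀ t ∈ Icc 0 T, HasDerivAt φ (X (φ t)) t}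
  by_contra hT
  have hS_le : ∀ T' ∈ S, T' ≤ T := fun T' ⟨_, φ, hφ₀, hφ⟩ ↦ le_of_not_gt fun hTT' ↦
    hT ⟨φ, hφ₀, fun t ht ↦ hφ t ⟨ht.1, ht.2.trans hTT'.le⟩⟩
  obtain ⟨r₀, hr₀, δ₀, hδ₀, hloc₀⟩ :=
    hX.exists_forall_mem_closedBall_exists_eq_forall_mem_Ioo_hasDerivAt x₀
  have h0S : (0 : ℝ) ∈ S := by
    obtain ⟨α, hα₀, hα⟩ := hloc₀ x₀ (mem_closedBall_self hr₀.le) 0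
    exact ⟨le_rfl, α, hα₀, fun t ht ↦ hα t ⟨by linarith [ht.1], by linarith [ht.2]⟩⟩
  obtain ⟨u, hu, hu_lim, huS⟩ := exists_seq_tendsto_sSup ⟨0, h0S⟩ ⟨T, hS_le⟩
  choose hu₀ φ hφ₀ hφ using huS
  obtain ⟨L, hL⟩ := cauchySeq_tendsto_of_complete
    (hX.cauchySeq_apply_of_forall_hasDerivAt hM hu hu_lim.cauchySeq (hu₀ 0) hφ₀ hφ)
  obtain ⟨r, hr, δ, hδ, hloc⟩ :=
    hX.exists_forall_mem_closedBall_exists_eq_forall_mem_Ioo_hasDerivAt L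
  obtain ⟨n, hn_near, hn_late⟩ := ((hL.eventually (closedBall_mem_nhds L hr)).and
    (hu_lim.eventually (Ioi_mem_nhds (show sSup S - δ / 2 < sSup S by linarith)))).exists
  obtain ⟨g, hg_start, hg⟩ := hloc _ hn_near (u n)
  obtain ⟨ψ, hψ₀, hψ⟩ := exists_forall_mem_Ico_hasDerivAt_of_glue (hu₀ n) hδ (hφ n) hg hg_start
  have hext : u n + δ / 2 ∈ S :=
    ⟨by linarith [hu₀ n], ψ, hψ₀.trans (hφ₀ n), fun t ht ↦ hψ t ⟨ht.1, by linarith [ht.2]⟩⟩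
  linarith [le_csSup ⟨T, hS_le⟩ hext, show sSup S - δ / 2 < u n from hn_late]

end

/-- Bootstrap flow estimate. If `X` is locally Lipschitz on the ball `B(0, 4ε)`
of a Banach space `E`, satisfies `‖X z‖ ≤ C ‖z‖³` there, and `8 C ε² ≤ 1`, then for every
`z₀` with `‖z₀‖ ≤ ε` the initial value problem `φ' = X ∘ φ`, `φ 0 = z₀` has a solution on all
of `[0, 1]`, unique there, satisfying `‖φ s‖ ≤ (1 + s) ‖z₀‖ ≤ 2 ‖z₀‖` and
`‖φ s − z₀‖ ≤ 8 C s ‖z₀‖³` for `s ∈ [0, 1]`. -/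
theorem birkhoff_flow_bootstrap
    (E : Type*) [NormedAddCommGroup E] [NormedSpace ℝ E] [CompleteSpace E]
    (C ε : ℝ) (hC : 0 < C) (hε : 0 < ε) (hsmall : 8 * C * ε ^ 2 ≤ 1)
    (X : E → E)
    (hlip : ∀ z ∈ Metric.ball (0 : E) (4 * ε),
      ∃ s ∈ nhdsWithin z (Metric.ball (0 : E) (4 * ε)), ∃ K : NNReal, LipschitzOnWith K X s)
    (hbound : ∀ z ∈ Metric.ball (0 : E) (4 * ε), ‖X z‖ ≤ C * ‖z‖ ^ 3)
    (z₀ : E) (hz₀ : ‖z₀‖ ≤ ε) :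
    ∃ φ : ℝ → E, φ 0 = z₀ ∧
      (∀ t ∈ Set.Icc (0 : ℝ) 1, HasDerivAt φ (X (φ t)) t) ∧
      (∀ s ∈ Set.Icc (0 : ℝ) 1,
        ‖φ s‖ ≤ (1 + s) * ‖z₀‖ ∧ (1 + s) * ‖z₀‖ ≤ 2 * ‖z₀‖ ∧
        ‖φ s - z₀‖ ≤ 8 * C * s * ‖z₀‖ ^ 3) ∧
      (∀ ψ : ℝ → E, ψ 0 = z₀ → (∀ t ∈ Set.Icc (0 : ℝ) 1, HasDerivAt ψ (X (ψ t)) t) →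
        Set.EqOn φ ψ (Set.Icc (0 : ℝ) 1)) := by
  have hX : LocallyLipschitzOn (ball (0 : E) (4 * ε)) X := fun z hz ↦
    let ⟨s, hs, K, hK⟩ := hlip z hz; ⟨K, s, hs, hK⟩
  have hR : closedBall (0 : E) (2 * ‖z₀‖) ⊆ ball 0 (4 * ε) := closedBall_subset_ball (by linarith)
  have hXr : ∀ z, ‖(X ∘ radialRetraction (2 * ‖z₀‖)) z‖ ≤ 8 * C * ‖z₀‖ ^ 3 := fun z ↦ by
    have hr := norm_radialRetraction_le (by positivity : 0 ≤ 2 * ‖z₀‖) z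
    calc _ ≤ C * ‖radialRetraction (2 * ‖z₀‖) z‖ ^ 3 := hbound _ (hR (mem_closedBall_zero_iff.2 hr))
      _ ≤ C * (2 * ‖z₀‖) ^ 3 := by gcongr
      _ = 8 * C * ‖z₀‖ ^ 3 := by ring
  have hXr_lip := hX.comp_radialRetraction (by positivity) hR
  obtain ⟨φ, hφ₀, hφ⟩ := hXr_lip.exists_forall_mem_Icc_hasDerivAt_of_bounded hXr z₀ 1
  have hdrift : ∀ s ∈ Icc (0 : ℝ) 1, ‖φ s - z₀‖ ≤ 8 * C * s * ‖z₀‖ ^ 3 := fun s hs ↦ by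
    have := norm_image_sub_le_of_norm_deriv_le_segment'
      (fun t ht ↦ (hφ t ⟨ht.1, ht.2.trans hs.2⟩).hasDerivWithinAt) (fun t _ ↦ hXr (φ t)) s
      (right_mem_Icc.2 hs.1)
    rw [hφ₀] at this
    linarith
  have hsmall₀ : 8 * C * ‖z₀‖ ^ 2 ≤ 1 := le_trans (by gcongr) hsmall
  have hgrowth : ∀ s ∈ Icc (0 : ℝ) 1, ‖φ s‖ ≤ (1 + s) * ‖z₀‖ := fun s hs ↦ by
    have hslow : 8 * C * s * ‖z₀‖ ^ 3 ≤ s * ‖z₀‖ := calc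
      _ = s * ‖z₀‖ * (8 * C * ‖z₀‖ ^ 2) := by ring
      _ ≤ s * ‖z₀‖ := mul_le_of_le_one_right (mul_nonneg hs.1 (norm_nonneg _)) hsmall₀
    linarith [hdrift s hs, norm_le_norm_sub_add (φ s) z₀]
  have hdouble : ∀ s ∈ Icc (0 : ℝ) 1, (1 + s) * ‖z₀‖ ≤ 2 * ‖z₀‖ := fun s hs ↦
    mul_le_mul_of_nonneg_right (by linarith [hs.2]) (norm_nonneg _)
  have hφR : ∀ t ∈ Icc (0 : ℝ) 1, ‖φ t‖ ≤ 2 * ‖z₀‖ := fun t ht ↦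
    (hgrowth t ht).trans (hdouble t ht)
  have hφX : ∀ t ∈ Icc (0 : ℝ) 1, HasDerivAt φ (X (φ t)) t := fun t ht ↦ by
    simpa [radialRetraction_of_norm_le (hφR t ht)] using hφ t ht
  have hφU : ∀ t ∈ Icc (0 : ℝ) 1, φ t ∈ ball (0 : E) (4 * ε) := fun t ht ↦
    hR (mem_closedBall_zero_iff.2 (hφR t ht))
  refine ⟨φ, hφ₀, hφX, fun s hs ↦ ⟨hgrowth s hs, hdouble s hs, hdrift s hs⟩,
    fun ψ hψ₀ hψ ↦ hX.eqOn_Icc_of_hasDerivAt isOpen_ball hφX hφU hψ (hφ₀.trans hψ₀.symm)⟩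
end

section
/- Let ν > 0 and ρ₁, ρ₂ ∈ [1,2], and let M be the 4×4 complex matrix M = −iν · [[ρ₁−ρ₂, 0, 0, √(ρ₁ρ₂)], [0, ρ₂−ρ₁, √(ρ₁ρ₂), 0], [0, −√(ρ₁ρ₂), ρ₂−ρ₁, 0], [−√(ρ₁ρ₂), 0, 0, ρ₁−ρ₂]]. Then the set of eigenvalues of M is exactly {ε·ν√(ρ₁ρ₂) + σ·iν(ρ₂−ρ₁) : ε, σ ∈ {−1, +1}}, and every eigenvalue λ of M has nonzero real part; in fact |Re λ| = ν√(ρ₁ρ₂) ≥ ν. (Hence the linearized system around the torus has hyperbolic directions, so the torus is linearly unstable.) -/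
/-!
The matrix splits into two `2 × 2` blocks `[[d, s], [-s, d]]`, on the coordinates `{0, 3}` with
`d = ρ₁ - ρ₂` and on `{1, 2}` with `d = ρ₂ - ρ₁`, where `s = √(ρ₁ρ₂)`. Such a block has eigenvalues
`d ± i s`, so after scaling by `-iν` the eigenvalues are `±ν s ± iν (ρ₂ - ρ₁)`. Their real parts are
`±ν √(ρ₁ρ₂)`, and `√(ρ₁ρ₂) ≥ 1` because `ρ₁, ρ₂ ≥ 1`.
-/

open Complex Matrix

theorem det_algebraMap_sub_smul_rotBlocks {R : Type*} [CommRing R] (l c a b s : R) :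
    det (algebraMap R (Matrix (Fin 4) (Fin 4) R) l -
        c • !![a, 0, 0, s; 0, b, s, 0; 0, -s, b, 0; -s, 0, 0, a]) =
      ((l - c * a) ^ 2 + (c * s) ^ 2) * ((l - c * b) ^ 2 + (c * s) ^ 2) := by
  simp [det_succ_row_zero, Fin.sum_univ_succ, algebraMap_matrix_apply, Fin.succAbove]
  ring

theorem mem_spectrum_iff_det_eq_zero {K n : Type*} [Field K] [Fintype n] [DecidableEq n]
    (A : Matrix n n K) (l : K) :
    l ∈ spectrum K A ↔ det (algebraMap K (Matrix n n K) l - A) = 0 := by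
  rw [spectrum.mem_iff, isUnit_iff_isUnit_det, isUnit_iff_ne_zero, not_not]

theorem sub_sq_add_sq_eq_zero_iff (l z w : ℂ) :
    (l - z) ^ 2 + w ^ 2 = 0 ↔ l = z + I * w ∨ l = z - I * w := by
  have hfactor : (l - z) ^ 2 + w ^ 2 = (l - (z + I * w)) * (l - (z - I * w)) := by
    linear_combination w ^ 2 * I_sq
  rw [hfactor, mul_eq_zero, sub_eq_zero, sub_eq_zero]

theorem spectrum_smul_rotBlocks (c a b s : ℂ) :
    spectrum ℂ (c • !![a, 0, 0, s; 0, b, s, 0; 0, -s, b, 0; -s, 0, 0, a]) =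
      {c * a + I * (c * s), c * a - I * (c * s), c * b + I * (c * s), c * b - I * (c * s)} := by
  ext l
  simp only [mem_spectrum_iff_det_eq_zero, det_algebraMap_sub_smul_rotBlocks, mul_eq_zero,
    sub_sq_add_sq_eq_zero_iff, Set.mem_insert_iff, Set.mem_singleton_iff, or_assoc]

theorem setOf_signs_eq (x : ℝ) (y : ℂ) :
    {l : ℂ | ∃ e s : ℝ, (e = 1 ∨ e = -1) ∧ (s = 1 ∨ s = -1) ∧ l = ((e * x : ℝ) : ℂ) + s * I * y} =
      {x + I * y, -x + I * y, x - I * y, -x - I * y} := by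
  ext l
  simp only [Set.mem_ofPred_eq, Set.mem_insert_iff, Set.mem_singleton_iff]
  constructor
  · rintro ⟨e, s, rfl | rfl, rfl | rfl, rfl⟩
    · exact Or.inl (by push_cast; ring)
    · exact Or.inr (Or.inr (Or.inl (by push_cast; ring)))
    · exact Or.inr (Or.inl (by push_cast; ring))
    · exact Or.inr (Or.inr (Or.inr (by push_cast; ring)))
  · rintro (rfl | rfl | rfl | rfl)
    exacts [⟨1, 1, by simp, by simp, by push_cast; ring⟩,
      ⟨-1, 1, by simp, by simp, by push_cast; ring⟩,
      ⟨1, -1, by simp, by simp, by push_cast; ring⟩,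
      ⟨-1, -1, by simp, by simp, by push_cast; ring⟩]

theorem spectrum_neg_I_smul_rotBlocks (ν ρ₁ ρ₂ S : ℝ) :
    spectrum ℂ ((-I * ν) • !![(ρ₁ : ℂ) - ρ₂, 0, 0, (S : ℂ); 0, (ρ₂ : ℂ) - ρ₁, (S : ℂ), 0;
      0, -(S : ℂ), (ρ₂ : ℂ) - ρ₁, 0; -(S : ℂ), 0, 0, (ρ₁ : ℂ) - ρ₂]) =
      {l : ℂ | ∃ e s : ℝ, (e = 1 ∨ e = -1) ∧ (s = 1 ∨ s = -1) ∧
        l = ((e * (ν * S) : ℝ) : ℂ) + (s : ℂ) * I * (ν : ℂ) * ((ρ₂ : ℂ) - ρ₁)} := by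
  have hrot : I * (-I * ν * S) = ((ν * S : ℝ) : ℂ) := by
    push_cast
    linear_combination (-ν * S : ℂ) * I_sq
  simp_rw [spectrum_smul_rotBlocks, hrot, mul_assoc _ (ν : ℂ), setOf_signs_eq]
  iterate 3 refine congrArg₂ _ (by ring) ?_
  exact congrArg _ (by ring)

/-- With `ν > 0` and `ρ₁, ρ₂ ∈ [1,2]`, the set of eigenvalues of the matrix
`M = −iν·[[ρ₁−ρ₂,0,0,√(ρ₁ρ₂)],[0,ρ₂−ρ₁,√(ρ₁ρ₂),0],[0,−√(ρ₁ρ₂),ρ₂−ρ₁,0],[−√(ρ₁ρ₂),0,0,ρ₁−ρ₂]]`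
is exactly `{ε·ν√(ρ₁ρ₂) + σ·iν(ρ₂−ρ₁) : ε, σ ∈ {−1,+1}}`, and every eigenvalue has nonzero
real part; in fact `|Re λ| = ν√(ρ₁ρ₂) ≥ ν` (linear instability of the torus). -/
theorem hyperbolic_matrix_spectrum (ν ρ₁ ρ₂ : ℝ) (hν : 0 < ν)
    (h₁ : ρ₁ ∈ Set.Icc (1 : ℝ) 2) (h₂ : ρ₂ ∈ Set.Icc (1 : ℝ) 2) :
    spectrum ℂ
      ((-Complex.I * (ν : ℂ)) •
        (!![(ρ₁ : ℂ) - ρ₂, 0, 0, (Real.sqrt (ρ₁ * ρ₂) : ℂ);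
           0, (ρ₂ : ℂ) - ρ₁, (Real.sqrt (ρ₁ * ρ₂) : ℂ), 0;
           0, -(Real.sqrt (ρ₁ * ρ₂) : ℂ), (ρ₂ : ℂ) - ρ₁, 0;
           -(Real.sqrt (ρ₁ * ρ₂) : ℂ), 0, 0, (ρ₁ : ℂ) - ρ₂] :
         Matrix (Fin 4) (Fin 4) ℂ)) =
      {l : ℂ | ∃ e s : ℝ, (e = 1 ∨ e = -1) ∧ (s = 1 ∨ s = -1) ∧
        l = ((e * (ν * Real.sqrt (ρ₁ * ρ₂)) : ℝ) : ℂ) +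
          (s : ℂ) * Complex.I * (ν : ℂ) * ((ρ₂ : ℂ) - ρ₁)} ∧
    ∀ l ∈ spectrum ℂ
      ((-Complex.I * (ν : ℂ)) •
        (!![(ρ₁ : ℂ) - ρ₂, 0, 0, (Real.sqrt (ρ₁ * ρ₂) : ℂ);
           0, (ρ₂ : ℂ) - ρ₁, (Real.sqrt (ρ₁ * ρ₂) : ℂ), 0;
           0, -(Real.sqrt (ρ₁ * ρ₂) : ℂ), (ρ₂ : ℂ) - ρ₁, 0;
           -(Real.sqrt (ρ₁ * ρ₂) : ℂ), 0, 0, (ρ₁ : ℂ) - ρ₂] :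
         Matrix (Fin 4) (Fin 4) ℂ)),
      l.re ≠ 0 ∧ |l.re| = ν * Real.sqrt (ρ₁ * ρ₂) ∧ ν ≤ ν * Real.sqrt (ρ₁ * ρ₂) := by
  have hS : 1 ≤ Real.sqrt (ρ₁ * ρ₂) :=
    Real.one_le_sqrt.2 (one_le_mul_of_one_le_of_one_le h₁.1 h₂.1)
  have hνS : 0 < ν * Real.sqrt (ρ₁ * ρ₂) := by positivity
  have hspec := spectrum_neg_I_smul_rotBlocks ν ρ₁ ρ₂ (Real.sqrt (ρ₁ * ρ₂))
  refine ⟨hspec, ?_⟩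
  rw [hspec]
  rintro _ ⟨e, s, he, -, rfl⟩
  have hre : ∀ x : ℝ, ((x : ℂ) + s * I * ν * ((ρ₂ : ℂ) - ρ₁)).re = x := by simp
  have habs : |e * (ν * Real.sqrt (ρ₁ * ρ₂))| = ν * Real.sqrt (ρ₁ * ρ₂) := by
    rcases he with rfl | rfl <;> simp only [one_mul, neg_one_mul, abs_neg, abs_of_pos hνS]
  rw [hre]
  exact ⟨abs_pos.mp (habs.symm ▸ hνS), habs, le_mul_of_one_le_right hν.le hS⟩
end

section
/- Let ν > 0 and ρ₁, ρ₂ ∈ [1,2], and let M be the 4×4 complex matrix M = −iν · [[ρ₁−ρ₂, 0, 0, √(ρ₁ρ₂)], [0, ρ₂−ρ₁, √(ρ₁ρ₂), 0], [0, −√(ρ₁ρ₂), ρ₂−ρ₁, 0], [−√(ρ₁ρ₂), 0, 0, ρ₁−ρ₂]]. Then M is diagonalizable over ℂ; in particular, when ρ₁ = ρ₂ the two eigenvalues ±ν√(ρ₁ρ₂) are each double eigenvalues and M is still diagonalizable. -/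
open Polynomial

/-! The matrix splits into the two 2×2 blocks `[[±d, s], [-s, ±d]]` on the coordinates
`{0, 3}` and `{1, 2}`, where `d = ρ₁ - ρ₂` and `s = √(ρ₁ρ₂)`. Each block has the eigenvectors
`(1, ±i)` with eigenvalues `±d ± is`, so one fixed invertible matrix diagonalizes it for all
`d` and `s`, and at `d = 0` the characteristic polynomial is read off the diagonal. -/

namespace Matrix

variable {n α : Type*} [Fintype n] [DecidableEq n] [CommRing α]

theorem eq_mul_mul_nonsing_inv_of_mul_eq {A P D : Matrix n n α} (hP : IsUnit P.det)
    (h : A * P = P * D) : A = P * D * P⁻¹ := by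
  rw [← h, mul_nonsing_inv_cancel_right _ _ hP]

theorem charpoly_mul_mul_nonsing_inv {P : Matrix n n α} (hP : IsUnit P.det) (D : Matrix n n α) :
    (P * D * P⁻¹).charpoly = D.charpoly := by
  rw [charpoly_mul_comm, ← Matrix.mul_assoc, nonsing_inv_mul _ hP, Matrix.one_mul]

end Matrix

namespace HyperbolicBlock

open Matrix Complex

def linearization (d s : ℂ) : Matrix (Fin 4) (Fin 4) ℂ :=
  !![d, 0, 0, s; 0, -d, s, 0; 0, -s, -d, 0; -s, 0, 0, d]

def eigenbasis : Matrix (Fin 4) (Fin 4) ℂ :=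
  !![1, 1, 0, 0; 0, 0, 1, 1; 0, 0, I, -I; I, -I, 0, 0]

def eigenvalues (d s : ℂ) : Fin 4 → ℂ :=
  ![d + I * s, d - I * s, -d + I * s, -d - I * s]

theorem det_eigenbasis : eigenbasis.det = -4 := by
  simp [eigenbasis, det_succ_row_zero, Fin.sum_univ_succ, Fin.succAbove]
  norm_num

theorem isUnit_det_eigenbasis : IsUnit eigenbasis.det := by
  rw [det_eigenbasis]
  norm_num

theorem linearization_mul_eigenbasis (d s : ℂ) :
    linearization d s * eigenbasis = eigenbasis * diagonal (eigenvalues d s) := by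
  ext i j
  fin_cases i <;> fin_cases j <;>
    simp [linearization, eigenbasis, eigenvalues, mul_apply, Fin.sum_univ_four] <;>
    ring_nf <;> simp [I_sq]

theorem smul_linearization_eq (c d s : ℂ) :
    c • linearization d s = eigenbasis * diagonal (c • eigenvalues d s) * eigenbasis⁻¹ := by
  rw [eq_mul_mul_nonsing_inv_of_mul_eq isUnit_det_eigenbasis (linearization_mul_eigenbasis d s),
    diagonal_smul, Matrix.mul_smul, Matrix.smul_mul]

theorem charpoly_smul_linearization (c d s : ℂ) :
    (c • linearization d s).charpoly = ∏ i, (X - C (c * eigenvalues d s i)) := by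
  rw [smul_linearization_eq, charpoly_mul_mul_nonsing_inv isUnit_det_eigenbasis, charpoly_diagonal]
  rfl

theorem charpoly_smul_linearization_of_eq_zero (c : ℂ) {d : ℂ} (hd : d = 0) (s : ℂ) :
    (c • linearization d s).charpoly = (X - C (I * c * s)) ^ 2 * (X + C (I * c * s)) ^ 2 := by
  rw [charpoly_smul_linearization, Fin.prod_univ_four]
  have hcs : c * (I * s) = I * c * s := by ring
  simp only [eigenvalues, hd, Matrix.cons_val, zero_add, zero_sub, neg_zero, mul_neg, hcs,
    map_neg, sub_neg_eq_add]
  ring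

theorem exists_smul_linearization_eq_conj_diag (c d s : ℂ) :
    ∃ P D : Matrix (Fin 4) (Fin 4) ℂ,
      IsUnit P ∧ D.IsDiag ∧ c • linearization d s = P * D * P⁻¹ :=
  ⟨eigenbasis, _, (isUnit_iff_isUnit_det _).2 isUnit_det_eigenbasis, isDiag_diagonal _,
    smul_linearization_eq c d s⟩

end HyperbolicBlock

open HyperbolicBlock in
theorem hyperbolic_matrix_diagonalizable_general (ν ρ₁ ρ₂ : ℝ) :
    (∃ P Dg : Matrix (Fin 4) (Fin 4) ℂ, IsUnit P ∧ Dg.IsDiag ∧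
      ((-Complex.I * (ν : ℂ)) •
        (!![(ρ₁ : ℂ) - ρ₂, 0, 0, (Real.sqrt (ρ₁ * ρ₂) : ℂ);
           0, (ρ₂ : ℂ) - ρ₁, (Real.sqrt (ρ₁ * ρ₂) : ℂ), 0;
           0, -(Real.sqrt (ρ₁ * ρ₂) : ℂ), (ρ₂ : ℂ) - ρ₁, 0;
           -(Real.sqrt (ρ₁ * ρ₂) : ℂ), 0, 0, (ρ₁ : ℂ) - ρ₂] :
         Matrix (Fin 4) (Fin 4) ℂ)) = P * Dg * P⁻¹) ∧
    (ρ₁ = ρ₂ →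
      ((-Complex.I * (ν : ℂ)) •
        (!![(ρ₁ : ℂ) - ρ₂, 0, 0, (Real.sqrt (ρ₁ * ρ₂) : ℂ);
           0, (ρ₂ : ℂ) - ρ₁, (Real.sqrt (ρ₁ * ρ₂) : ℂ), 0;
           0, -(Real.sqrt (ρ₁ * ρ₂) : ℂ), (ρ₂ : ℂ) - ρ₁, 0;
           -(Real.sqrt (ρ₁ * ρ₂) : ℂ), 0, 0, (ρ₁ : ℂ) - ρ₂] :
         Matrix (Fin 4) (Fin 4) ℂ)).charpoly =
        (X - Polynomial.C ((ν * Real.sqrt (ρ₁ * ρ₂) : ℝ) : ℂ)) ^ 2 *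
          (X + Polynomial.C ((ν * Real.sqrt (ρ₁ * ρ₂) : ℝ) : ℂ)) ^ 2) := by
  rw [← neg_sub (ρ₁ : ℂ) ρ₂]
  refine ⟨exists_smul_linearization_eq_conj_diag _ _ (Real.sqrt (ρ₁ * ρ₂)), fun hρ => ?_⟩
  have hd : (ρ₁ : ℂ) - ρ₂ = 0 := by rw [hρ, sub_self]
  have hνs : Complex.I * (-Complex.I * ν) * √(ρ₁ * ρ₂) = ((ν * √(ρ₁ * ρ₂) : ℝ) : ℂ) := by
    push_cast
    linear_combination -(ν * √(ρ₁ * ρ₂) : ℂ) * Complex.I_sq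
  rw [← hνs]
  exact charpoly_smul_linearization_of_eq_zero _ hd _

/-- With `ν > 0` and `ρ₁, ρ₂ ∈ [1,2]`, the matrix
`M = −iν·[[ρ₁−ρ₂,0,0,√(ρ₁ρ₂)],[0,ρ₂−ρ₁,√(ρ₁ρ₂),0],[0,−√(ρ₁ρ₂),ρ₂−ρ₁,0],[−√(ρ₁ρ₂),0,0,ρ₁−ρ₂]]`
is diagonalizable over `ℂ` (i.e. `M = P D P⁻¹` with `P` invertible and `D` diagonal); in
particular, when `ρ₁ = ρ₂` the two eigenvalues `±ν√(ρ₁ρ₂)` are each double eigenvalues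
(the characteristic polynomial is `(λ − ν√(ρ₁ρ₂))²(λ + ν√(ρ₁ρ₂))²`) and `M` is still
diagonalizable. -/
theorem hyperbolic_matrix_diagonalizable (ν ρ₁ ρ₂ : ℝ) (hν : 0 < ν)
    (h₁ : ρ₁ ∈ Set.Icc (1 : ℝ) 2) (h₂ : ρ₂ ∈ Set.Icc (1 : ℝ) 2) :
    (∃ P Dg : Matrix (Fin 4) (Fin 4) ℂ, IsUnit P ∧ Dg.IsDiag ∧
      ((-Complex.I * (ν : ℂ)) •
        (!![(ρ₁ : ℂ) - ρ₂, 0, 0, (Real.sqrt (ρ₁ * ρ₂) : ℂ);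
           0, (ρ₂ : ℂ) - ρ₁, (Real.sqrt (ρ₁ * ρ₂) : ℂ), 0;
           0, -(Real.sqrt (ρ₁ * ρ₂) : ℂ), (ρ₂ : ℂ) - ρ₁, 0;
           -(Real.sqrt (ρ₁ * ρ₂) : ℂ), 0, 0, (ρ₁ : ℂ) - ρ₂] :
         Matrix (Fin 4) (Fin 4) ℂ)) = P * Dg * P⁻¹) ∧
    (ρ₁ = ρ₂ →
      ((-Complex.I * (ν : ℂ)) •
        (!![(ρ₁ : ℂ) - ρ₂, 0, 0, (Real.sqrt (ρ₁ * ρ₂) : ℂ);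
           0, (ρ₂ : ℂ) - ρ₁, (Real.sqrt (ρ₁ * ρ₂) : ℂ), 0;
           0, -(Real.sqrt (ρ₁ * ρ₂) : ℂ), (ρ₂ : ℂ) - ρ₁, 0;
           -(Real.sqrt (ρ₁ * ρ₂) : ℂ), 0, 0, (ρ₁ : ℂ) - ρ₂] :
         Matrix (Fin 4) (Fin 4) ℂ)).charpoly =
        (X - Polynomial.C ((ν * Real.sqrt (ρ₁ * ρ₂) : ℝ) : ℂ)) ^ 2 *
          (X + Polynomial.C ((ν * Real.sqrt (ρ₁ * ρ₂) : ℝ) : ℂ)) ^ 2) :=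
  hyperbolic_matrix_diagonalizable_general ν ρ₁ ρ₂
end

section
/- Fix p, q ∈ ℤ and ν > 0, and define Ω : ℝ² → ℝ² by Ω(ρ₁, ρ₂) = (p² + νρ₂, q² + νρ₁). Then for every k = (k₁,k₂) ∈ ℤ²∖{0}, the directional derivative of ρ ↦ Ω(ρ)·k along the unit vector 𝔷 = (k₂, k₁)/‖k‖ equals ν‖k‖, where ‖k‖ is the Euclidean norm. Moreover, for any real numbers m, m', any functions Λ, Λ' each of one of the forms ρ ↦ m + νρ₁ or ρ ↦ m + νρ₂, and either choice of sign ±, the directional derivative of ρ ↦ Ω(ρ)·k + Λ(ρ) ± Λ'(ρ) along 𝔷 is at least ν(‖k‖ − 2); in particular it is at least ν whenever ‖k‖ ≥ 3. -/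
/-! Every function involved is affine in `ρ`, so all directional derivatives are constants.
Along `𝔷 = (k₂, k₁)/‖k‖` the derivative of `Ω(ρ)·k` is `ν (k₂² + k₁²)/‖k‖ = ν‖k‖`, while each
`Λ` has derivative `ν` times a coordinate of `𝔷`, of absolute value at most `ν`; so `Λ ± Λ'`
can lower the derivative by at most `2ν`. -/

open Real ContinuousLinearMap

lemma hasFDerivAt_const_add_mul_fst (m ν : ℝ) (ρ : ℝ × ℝ) :
    HasFDerivAt (fun ρ : ℝ × ℝ => m + ν * ρ.1) (ν • fst ℝ ℝ ℝ) ρ :=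
  (hasFDerivAt_fst.const_mul ν).const_add m

lemma hasFDerivAt_const_add_mul_snd (m ν : ℝ) (ρ : ℝ × ℝ) :
    HasFDerivAt (fun ρ : ℝ × ℝ => m + ν * ρ.2) (ν • snd ℝ ℝ ℝ) ρ :=
  (hasFDerivAt_snd.const_mul ν).const_add m

lemma hasFDerivAt_frequency_dot (P Q ν a b : ℝ) (ρ : ℝ × ℝ) :
    HasFDerivAt (fun ρ : ℝ × ℝ => (P + ν * ρ.2) * a + (Q + ν * ρ.1) * b)
      (ν • (b • fst ℝ ℝ ℝ + a • snd ℝ ℝ ℝ)) ρ := by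
  refine (((hasFDerivAt_const_add_mul_snd P ν ρ).mul_const a).add
    ((hasFDerivAt_const_add_mul_fst Q ν ρ).mul_const b)).congr_fderiv ?_
  ext <;> simp [mul_comm]

lemma differentiableAt_and_norm_fderiv_le_of_coordinate_form {m ν : ℝ} {Λ : ℝ × ℝ → ℝ}
    (hΛ : (Λ = fun ρ => m + ν * ρ.1) ∨ (Λ = fun ρ => m + ν * ρ.2)) (ρ : ℝ × ℝ) :
    DifferentiableAt ℝ Λ ρ ∧ ‖fderiv ℝ Λ ρ‖ ≤ |ν| := by
  rcases hΛ with rfl | rfl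
  · refine ⟨(hasFDerivAt_const_add_mul_fst m ν ρ).differentiableAt, ?_⟩
    rw [(hasFDerivAt_const_add_mul_fst m ν ρ).fderiv]
    exact (norm_smul_le _ _).trans (mul_le_of_le_one_right (abs_nonneg ν) (norm_fst_le ℝ ℝ ℝ))
  · refine ⟨(hasFDerivAt_const_add_mul_snd m ν ρ).differentiableAt, ?_⟩
    rw [(hasFDerivAt_const_add_mul_snd m ν ρ).fderiv]
    exact (norm_smul_le _ _).trans (mul_le_of_le_one_right (abs_nonneg ν) (norm_snd_le ℝ ℝ ℝ))

lemma sub_two_mul_le_fderiv_add_add_mul {E : Type*} [NormedAddCommGroup E] [NormedSpace ℝ E]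
    {A Λ Λ' : E → ℝ} {x z : E} {C e : ℝ} (hA : DifferentiableAt ℝ A x)
    (hΛ : DifferentiableAt ℝ Λ x) (hΛ' : DifferentiableAt ℝ Λ' x)
    (hΛC : ‖fderiv ℝ Λ x‖ ≤ C) (hΛ'C : ‖fderiv ℝ Λ' x‖ ≤ C) (he : |e| ≤ 1) (hz : ‖z‖ ≤ 1) :
    fderiv ℝ A x z - 2 * C ≤ fderiv ℝ (fun y => A y + Λ y + e * Λ' y) x z := by
  have hsplit : fderiv ℝ (fun y => A y + Λ y + e * Λ' y) x z =
      fderiv ℝ A x z + fderiv ℝ Λ x z + e * fderiv ℝ Λ' x z := by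
    have h : HasFDerivAt (fun y => A y + Λ y + e * Λ' y) _ x :=
      (hA.hasFDerivAt.add hΛ.hasFDerivAt).add (hΛ'.hasFDerivAt.const_mul e)
    rw [h.fderiv]
    simp
  have hbound : ∀ L : E →L[ℝ] ℝ, ‖L‖ ≤ C → |L z| ≤ C := fun L hL =>
    ((L.le_opNorm z).trans (mul_le_of_le_one_right (norm_nonneg L) hz)).trans hL
  have hΛz := abs_le.mp (hbound _ hΛC)
  have heΛ'z := abs_le.mp (((abs_mul e _).trans_le
    (mul_le_of_le_one_left (abs_nonneg _) he)).trans (hbound _ hΛ'C))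
  rw [hsplit]
  linarith [hΛz.1, heΛ'z.1]

lemma mul_div_sqrt_add_mul_div_sqrt (a b : ℝ) :
    b * (b / √(a ^ 2 + b ^ 2)) + a * (a / √(a ^ 2 + b ^ 2)) = √(a ^ 2 + b ^ 2) := by
  calc _ = (a ^ 2 + b ^ 2) / √(a ^ 2 + b ^ 2) := by ring
    _ = _ := div_sqrt

lemma fderiv_frequency_dot_apply_div_sqrt (P Q ν a b : ℝ) (ρ : ℝ × ℝ) :
    fderiv ℝ (fun ρ : ℝ × ℝ => (P + ν * ρ.2) * a + (Q + ν * ρ.1) * b) ρ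
      (b / √(a ^ 2 + b ^ 2), a / √(a ^ 2 + b ^ 2)) = ν * √(a ^ 2 + b ^ 2) := by
  rw [(hasFDerivAt_frequency_dot P Q ν a b ρ).fderiv]
  simp only [smul_apply, add_apply, coe_fst', coe_snd', smul_eq_mul]
  linear_combination ν * mul_div_sqrt_add_mul_div_sqrt a b

lemma abs_div_sqrt_sq_add_sq_le_one (a b : ℝ) : |a / √(a ^ 2 + b ^ 2)| ≤ 1 := by
  rw [abs_div, abs_of_nonneg (sqrt_nonneg _)]
  exact div_le_one_of_le₀ (abs_le_sqrt (le_add_of_nonneg_right (sq_nonneg b))) (sqrt_nonneg _)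

-- `ℝ × ℝ` carries the sup norm, so this bounds both coordinates by `1`.
lemma norm_div_sqrt_sq_add_sq_le_one (a b : ℝ) :
    ‖((b / √(a ^ 2 + b ^ 2), a / √(a ^ 2 + b ^ 2)) : ℝ × ℝ)‖ ≤ 1 := by
  rw [Prod.norm_def, Real.norm_eq_abs, Real.norm_eq_abs]
  refine max_le ?_ (abs_div_sqrt_sq_add_sq_le_one a b)
  rw [add_comm]
  exact abs_div_sqrt_sq_add_sq_le_one b a

theorem transversality_hypothesis_A2_general (p q : ℤ) (ν : ℝ) (hν : 0 < ν)
    (k₁ k₂ : ℤ) :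
    (∀ ρ : ℝ × ℝ,
      fderiv ℝ (fun ρ : ℝ × ℝ =>
          ((p : ℝ) ^ 2 + ν * ρ.2) * (k₁ : ℝ) + ((q : ℝ) ^ 2 + ν * ρ.1) * (k₂ : ℝ)) ρ
        ((k₂ : ℝ) / Real.sqrt ((k₁ : ℝ) ^ 2 + (k₂ : ℝ) ^ 2),
         (k₁ : ℝ) / Real.sqrt ((k₁ : ℝ) ^ 2 + (k₂ : ℝ) ^ 2)) =
      ν * Real.sqrt ((k₁ : ℝ) ^ 2 + (k₂ : ℝ) ^ 2)) ∧
    ∀ (m m' : ℝ) (Λ Λ' : ℝ × ℝ → ℝ),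
      ((Λ = fun ρ => m + ν * ρ.1) ∨ (Λ = fun ρ => m + ν * ρ.2)) →
      ((Λ' = fun ρ => m' + ν * ρ.1) ∨ (Λ' = fun ρ => m' + ν * ρ.2)) →
      ∀ e : ℝ, (e = 1 ∨ e = -1) → ∀ ρ : ℝ × ℝ,
        ν * (Real.sqrt ((k₁ : ℝ) ^ 2 + (k₂ : ℝ) ^ 2) - 2) ≤
          fderiv ℝ (fun ρ : ℝ × ℝ =>
              ((p : ℝ) ^ 2 + ν * ρ.2) * (k₁ : ℝ) + ((q : ℝ) ^ 2 + ν * ρ.1) * (k₂ : ℝ) +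
                Λ ρ + e * Λ' ρ) ρ
            ((k₂ : ℝ) / Real.sqrt ((k₁ : ℝ) ^ 2 + (k₂ : ℝ) ^ 2),
             (k₁ : ℝ) / Real.sqrt ((k₁ : ℝ) ^ 2 + (k₂ : ℝ) ^ 2)) ∧
        (3 ≤ Real.sqrt ((k₁ : ℝ) ^ 2 + (k₂ : ℝ) ^ 2) →
          ν ≤ fderiv ℝ (fun ρ : ℝ × ℝ =>
              ((p : ℝ) ^ 2 + ν * ρ.2) * (k₁ : ℝ) + ((q : ℝ) ^ 2 + ν * ρ.1) * (k₂ : ℝ) +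
                Λ ρ + e * Λ' ρ) ρ
            ((k₂ : ℝ) / Real.sqrt ((k₁ : ℝ) ^ 2 + (k₂ : ℝ) ^ 2),
             (k₁ : ℝ) / Real.sqrt ((k₁ : ℝ) ^ 2 + (k₂ : ℝ) ^ 2))) := by
  refine ⟨fderiv_frequency_dot_apply_div_sqrt _ _ ν _ _, fun m m' Λ Λ' hΛ hΛ' e he ρ => ?_⟩
  obtain ⟨hΛd, hΛn⟩ := differentiableAt_and_norm_fderiv_le_of_coordinate_form hΛ ρ
  obtain ⟨hΛ'd, hΛ'n⟩ := differentiableAt_and_norm_fderiv_le_of_coordinate_form hΛ' ρ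
  have he1 : |e| ≤ 1 := by rcases he with rfl | rfl <;> simp
  have hlow := sub_two_mul_le_fderiv_add_add_mul
    (hasFDerivAt_frequency_dot ((p : ℝ) ^ 2) ((q : ℝ) ^ 2) ν k₁ k₂ ρ).differentiableAt
    hΛd hΛ'd hΛn hΛ'n he1 (norm_div_sqrt_sq_add_sq_le_one (k₁ : ℝ) k₂)
  rw [fderiv_frequency_dot_apply_div_sqrt, abs_of_pos hν] at hlow
  exact ⟨by linarith, fun h3 => by nlinarith⟩

/-- For `Ω(ρ) = (p² + νρ₂, q² + νρ₁)` and `k ∈ ℤ²∖{0}`, the directional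
derivative of `ρ ↦ Ω(ρ)·k` along the unit vector `𝔷 = (k₂, k₁)/‖k‖` equals `ν‖k‖`
(Euclidean norm). Moreover, for any `Λ, Λ'` of the forms `ρ ↦ m + νρ₁` or `ρ ↦ m + νρ₂`
and either sign `e = ±1`, the directional derivative of `ρ ↦ Ω(ρ)·k + Λ(ρ) + e·Λ'(ρ)`
along `𝔷` is at least `ν(‖k‖ − 2)`; in particular it is at least `ν` when `‖k‖ ≥ 3`. -/
theorem transversality_hypothesis_A2 (p q : ℤ) (ν : ℝ) (hν : 0 < ν)
    (k₁ k₂ : ℤ) (hk : ¬(k₁ = 0 ∧ k₂ = 0)) :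
    (∀ ρ : ℝ × ℝ,
      fderiv ℝ (fun ρ : ℝ × ℝ =>
          ((p : ℝ) ^ 2 + ν * ρ.2) * (k₁ : ℝ) + ((q : ℝ) ^ 2 + ν * ρ.1) * (k₂ : ℝ)) ρ
        ((k₂ : ℝ) / Real.sqrt ((k₁ : ℝ) ^ 2 + (k₂ : ℝ) ^ 2),
         (k₁ : ℝ) / Real.sqrt ((k₁ : ℝ) ^ 2 + (k₂ : ℝ) ^ 2)) =
      ν * Real.sqrt ((k₁ : ℝ) ^ 2 + (k₂ : ℝ) ^ 2)) ∧
    ∀ (m m' : ℝ) (Λ Λ' : ℝ × ℝ → ℝ),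
      ((Λ = fun ρ => m + ν * ρ.1) ∨ (Λ = fun ρ => m + ν * ρ.2)) →
      ((Λ' = fun ρ => m' + ν * ρ.1) ∨ (Λ' = fun ρ => m' + ν * ρ.2)) →
      ∀ e : ℝ, (e = 1 ∨ e = -1) → ∀ ρ : ℝ × ℝ,
        ν * (Real.sqrt ((k₁ : ℝ) ^ 2 + (k₂ : ℝ) ^ 2) - 2) ≤
          fderiv ℝ (fun ρ : ℝ × ℝ =>
              ((p : ℝ) ^ 2 + ν * ρ.2) * (k₁ : ℝ) + ((q : ℝ) ^ 2 + ν * ρ.1) * (k₂ : ℝ) +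
                Λ ρ + e * Λ' ρ) ρ
            ((k₂ : ℝ) / Real.sqrt ((k₁ : ℝ) ^ 2 + (k₂ : ℝ) ^ 2),
             (k₁ : ℝ) / Real.sqrt ((k₁ : ℝ) ^ 2 + (k₂ : ℝ) ^ 2)) ∧
        (3 ≤ Real.sqrt ((k₁ : ℝ) ^ 2 + (k₂ : ℝ) ^ 2) →
          ν ≤ fderiv ℝ (fun ρ : ℝ × ℝ =>
              ((p : ℝ) ^ 2 + ν * ρ.2) * (k₁ : ℝ) + ((q : ℝ) ^ 2 + ν * ρ.1) * (k₂ : ℝ) +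
                Λ ρ + e * Λ' ρ) ρ
            ((k₂ : ℝ) / Real.sqrt ((k₁ : ℝ) ^ 2 + (k₂ : ℝ) ^ 2),
             (k₁ : ℝ) / Real.sqrt ((k₁ : ℝ) ^ 2 + (k₂ : ℝ) ^ 2))) :=
  transversality_hypothesis_A2_general p q ν hν k₁ k₂
end

section
/- Fix p, q ∈ ℤ and ν > 0, and define Ω : ℝ² → ℝ² by Ω(ρ₁, ρ₂) = (p² + νρ₂, q² + νρ₁). Let k = (−2, 2) or k = (2, −2), and let 𝔷 = (k₂, k₁)/‖k‖ (Euclidean norm). Then for any real numbers m, m' and any functions Λ, Λ' each of one of the forms ρ ↦ m + νρ₁ or ρ ↦ m + νρ₂, the directional derivative of ρ ↦ Ω(ρ)·k + Λ(ρ) − Λ'(ρ) along 𝔷 is at least √2·ν at every point ρ ∈ ℝ². -/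
/-!
The map is affine with gradient `ν (k₂, k₁) + ν (eᵢ - eⱼ)`, where `Λ, Λ'` contribute `eᵢ, eⱼ`.
Along `𝔷 = (k₂, k₁) / ‖k‖` the first part gives `ν ‖k‖` and the second at least
`-ν |k₁ - k₂| / ‖k‖`; for `k = ±(2, -2)` this is `ν (2√2 - √2) = √2 ν`.
-/

open ContinuousLinearMap

section

variable {ν : ℝ}

lemma exists_hasFDerivAt_smul_fst_or_snd {m : ℝ} {Λ : ℝ × ℝ → ℝ}
    (hΛ : (Λ = fun ρ => m + ν * ρ.1) ∨ (Λ = fun ρ => m + ν * ρ.2)) (ρ : ℝ × ℝ) :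
    ∃ ℓ ∈ ({fst ℝ ℝ ℝ, snd ℝ ℝ ℝ} : Set (ℝ × ℝ →L[ℝ] ℝ)), HasFDerivAt Λ (ν • ℓ) ρ := by
  rcases hΛ with rfl | rfl
  · exact ⟨_, .inl rfl, (hasFDerivAt_fst.const_mul ν).const_add m⟩
  · exact ⟨_, .inr rfl, (hasFDerivAt_snd.const_mul ν).const_add m⟩

lemma neg_abs_sub_le_sub_of_mem_fst_snd {ℓ ℓ' : ℝ × ℝ →L[ℝ] ℝ}
    (hℓ : ℓ ∈ ({fst ℝ ℝ ℝ, snd ℝ ℝ ℝ} : Set (ℝ × ℝ →L[ℝ] ℝ)))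
    (hℓ' : ℓ' ∈ ({fst ℝ ℝ ℝ, snd ℝ ℝ ℝ} : Set (ℝ × ℝ →L[ℝ] ℝ))) (v : ℝ × ℝ) :
    -|v.1 - v.2| ≤ ℓ v - ℓ' v := by
  rcases hℓ with rfl | rfl <;> rcases hℓ' with rfl | rfl <;> simp only [coe_fst', coe_snd'] <;>
    linarith [abs_nonneg (v.1 - v.2), neg_abs_le (v.1 - v.2), neg_abs_le (v.2 - v.1),
      abs_sub_comm v.1 v.2]

theorem mul_sqrt_sub_le_fderiv_apply (hν : 0 ≤ ν) (a b κ₁ κ₂ m m' : ℝ) {Λ Λ' : ℝ × ℝ → ℝ}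
    (hΛ : (Λ = fun ρ => m + ν * ρ.1) ∨ (Λ = fun ρ => m + ν * ρ.2))
    (hΛ' : (Λ' = fun ρ => m' + ν * ρ.1) ∨ (Λ' = fun ρ => m' + ν * ρ.2)) (ρ : ℝ × ℝ) :
    ν * (√(κ₁ ^ 2 + κ₂ ^ 2) - |κ₁ - κ₂| / √(κ₁ ^ 2 + κ₂ ^ 2)) ≤
      fderiv ℝ (fun ρ : ℝ × ℝ => (a + ν * ρ.2) * κ₁ + (b + ν * ρ.1) * κ₂ + Λ ρ - Λ' ρ) ρ
        (κ₂ / √(κ₁ ^ 2 + κ₂ ^ 2), κ₁ / √(κ₁ ^ 2 + κ₂ ^ 2)) := by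
  set s := √(κ₁ ^ 2 + κ₂ ^ 2) with hs
  set z : ℝ × ℝ := (κ₂ / s, κ₁ / s)
  obtain ⟨ℓ, hℓ, hΛd⟩ := exists_hasFDerivAt_smul_fst_or_snd hΛ ρ
  obtain ⟨ℓ', hℓ', hΛ'd⟩ := exists_hasFDerivAt_smul_fst_or_snd hΛ' ρ
  have hΩ := (((hasFDerivAt_snd (𝕜 := ℝ) (p := ρ)).const_mul ν).const_add a |>.mul_const κ₁).fun_add
    (((hasFDerivAt_fst (𝕜 := ℝ) (p := ρ)).const_mul ν).const_add b |>.mul_const κ₂)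
  have hz : |z.1 - z.2| = |κ₁ - κ₂| / s := by
    rw [div_sub_div_same, abs_div, abs_of_nonneg (Real.sqrt_nonneg _), abs_sub_comm]
  calc ν * (s - |κ₁ - κ₂| / s)
      ≤ ν * ((κ₁ ^ 2 + κ₂ ^ 2) / s + (ℓ z - ℓ' z)) := by
        rw [hs, Real.div_sqrt, ← hs, sub_eq_add_neg, ← hz]
        gcongr
        exact neg_abs_sub_le_sub_of_mem_fst_snd hℓ hℓ' z
    _ = _ := by
        rw [((hΩ.fun_add hΛd).fun_sub hΛ'd).fderiv]
        simp only [z, sub_apply, add_apply, smul_apply, coe_fst', coe_snd', smul_eq_mul]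
        ring

end

lemma sqrt_sub_abs_sub_div_sqrt_of_exceptional {k₁ k₂ : ℤ}
    (hk : (k₁ = -2 ∧ k₂ = 2) ∨ (k₁ = 2 ∧ k₂ = -2)) :
    √((k₁ : ℝ) ^ 2 + (k₂ : ℝ) ^ 2) - |(k₁ : ℝ) - k₂| / √((k₁ : ℝ) ^ 2 + (k₂ : ℝ) ^ 2) = √2 := by
  have h8 : √8 = 2 * √2 := by
    rw [show (8 : ℝ) = 2 ^ 2 * 2 by norm_num, Real.sqrt_mul (by positivity),
      Real.sqrt_sq (by norm_num)]
  have h2 : √2 * √2 = 2 := Real.mul_self_sqrt (by norm_num)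
  have h2pos : 0 < √2 := by positivity
  rcases hk with ⟨rfl, rfl⟩ | ⟨rfl, rfl⟩ <;> norm_num [h8] <;> field_simp <;> linarith

/-- For `Ω(ρ) = (p² + νρ₂, q² + νρ₁)` and the exceptional vectors
`k = (−2, 2)` or `k = (2, −2)`, with `𝔷 = (k₂, k₁)/‖k‖` (Euclidean norm), the directional
derivative of `ρ ↦ Ω(ρ)·k + Λ(ρ) − Λ'(ρ)` along `𝔷` is at least `√2·ν` at every `ρ ∈ ℝ²`,
for any `Λ, Λ'` of the forms `ρ ↦ m + νρ₁` or `ρ ↦ m + νρ₂`. -/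
theorem transversality_exceptional_k (p q : ℤ) (ν : ℝ) (hν : 0 < ν)
    (k₁ k₂ : ℤ) (hk : (k₁ = -2 ∧ k₂ = 2) ∨ (k₁ = 2 ∧ k₂ = -2)) :
    ∀ (m m' : ℝ) (Λ Λ' : ℝ × ℝ → ℝ),
      ((Λ = fun ρ => m + ν * ρ.1) ∨ (Λ = fun ρ => m + ν * ρ.2)) →
      ((Λ' = fun ρ => m' + ν * ρ.1) ∨ (Λ' = fun ρ => m' + ν * ρ.2)) →
      ∀ ρ : ℝ × ℝ,
        Real.sqrt 2 * ν ≤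
          fderiv ℝ (fun ρ : ℝ × ℝ =>
              ((p : ℝ) ^ 2 + ν * ρ.2) * (k₁ : ℝ) + ((q : ℝ) ^ 2 + ν * ρ.1) * (k₂ : ℝ) +
                Λ ρ - Λ' ρ) ρ
            ((k₂ : ℝ) / Real.sqrt ((k₁ : ℝ) ^ 2 + (k₂ : ℝ) ^ 2),
             (k₁ : ℝ) / Real.sqrt ((k₁ : ℝ) ^ 2 + (k₂ : ℝ) ^ 2)) := by
  intro m m' Λ Λ' hΛ hΛ' ρ
  have h := mul_sqrt_sub_le_fderiv_apply hν.le ((p : ℝ) ^ 2) ((q : ℝ) ^ 2) k₁ k₂ m m' hΛ hΛ' ρ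
  rwa [sqrt_sub_abs_sub_div_sqrt_of_exceptional hk, mul_comm] at h
end
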